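/- arXiv:2309.09407 — 6 statements merged into one kernel-verified Lean document; each statement's English description precedes it below -/
import Mathlib

section
/- For every p ≥ 1, every prime number q, and every integer m ≥ 0, B(p, q^m) = ((q^p − 1)(q^{p+1} − 1)⋯(q^{p+m−1} − 1)) / ((q − 1)(q^2 − 1)⋯(q^m − 1)), i.e. B(p,q^m) equals the Gaussian binomial coefficient [m+p−1 choose m]_q. -/
/-- `B p n = Σ_{s₁ | s₂ | ⋯ | s_{p-1} | n} s₁⋯s_{p-1}`, the sum over `(p-1)`-tuples of
positive integers forming a divisibility chain ending at `n`, of their product. -/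
def B (p n : ℕ) : ℕ :=
  ∑ s ∈ Finset.filter
      (fun s : Fin (p - 1) → ℕ =>
        ∀ i : Fin (p - 1),
          s i ∣ if h : i.val + 1 < p - 1 then s ⟨i.val + 1, h⟩ else n)
      (Fintype.piFinset fun _ => n.divisors),
    ∏ i, s i

/-!
Splitting off the largest entry `d` of a chain gives `B (p + 1) n = Σ_{d ∣ n} d * B p d`.
For `n = q ^ m` the divisors are the `q ^ j`, so by induction on `p` the theorem reduces to
`Σ_{j ≤ m} q ^ j [j + p - 1, j]_q = [m + p, m]_q`, which is the `q`-Pascal rule summed over `m`.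
-/

open Finset

abbrev IsDivChain {k : ℕ} (n : ℕ) (s : Fin k → ℕ) : Prop :=
  ∀ i : Fin k, s i ∣ if h : i.val + 1 < k then s ⟨i.val + 1, h⟩ else n

def divChains (k n : ℕ) : Finset (Fin k → ℕ) :=
  (Fintype.piFinset fun _ => n.divisors).filter (IsDivChain n)

lemma B_succ_eq_sum_divChains (k n : ℕ) : B (k + 1) n = ∑ s ∈ divChains k n, ∏ i, s i := rfl

lemma isDivChain_snoc {k n d : ℕ} {t : Fin k → ℕ} :
    IsDivChain n (Fin.snoc t d : Fin (k + 1) → ℕ) ↔ IsDivChain d t ∧ d ∣ n := by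
  simp only [IsDivChain, Fin.forall_fin_succ', Fin.snoc_castSucc, Fin.snoc_last, Fin.val_last,
    Fin.val_castSucc, lt_irrefl, dite_false]
  refine and_congr_left' (forall_congr' fun i => ?_)
  by_cases h : i.val + 1 < k
  · simp [h, Fin.snoc]
  · have : i.val + 1 = k := by omega
    simp [this, Fin.snoc]

lemma IsDivChain.dvd {k n : ℕ} {s : Fin k → ℕ} (hs : IsDivChain n s) (i : Fin k) :
    s i ∣ n := by
  induction k generalizing n with
  | zero => exact i.elim0
  | succ k ih =>
    rw [← Fin.snoc_init_self s, isDivChain_snoc] at hs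
    induction i using Fin.lastCases with
    | last => exact hs.2
    | cast j => exact (ih hs.1 j).trans hs.2

lemma mem_divChains {k n : ℕ} (hn : n ≠ 0) {s : Fin k → ℕ} :
    s ∈ divChains k n ↔ IsDivChain n s := by
  simp only [divChains, mem_filter, Fintype.mem_piFinset, Nat.mem_divisors, and_iff_right_iff_imp]
  exact fun hs i => ⟨hs.dvd i, hn⟩

lemma B_one (n : ℕ) : B 1 n = 1 := by
  simp [B]

lemma B_succ_succ (k n : ℕ) (hn : n ≠ 0) :
    B (k + 2) n = ∑ d ∈ n.divisors, d * B (k + 1) d := by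
  simp only [B_succ_eq_sum_divChains, mul_sum, sum_sigma']
  refine sum_nbij' (fun s => ⟨s (Fin.last k), Fin.init s⟩) (fun x => Fin.snoc x.2 x.1)
    ?_ ?_ ?_ ?_ ?_
  · intro s hs
    rw [mem_divChains hn, ← Fin.snoc_init_self s, isDivChain_snoc] at hs
    exact mem_sigma.2 ⟨Nat.mem_divisors.2 ⟨hs.2, hn⟩,
      (mem_divChains (ne_zero_of_dvd_ne_zero hn hs.2)).2 hs.1⟩
  · rintro ⟨d, t⟩ hx
    simp only [mem_sigma, Nat.mem_divisors] at hx
    obtain ⟨⟨hdn, -⟩, ht⟩ := hx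
    rw [mem_divChains (ne_zero_of_dvd_ne_zero hn hdn)] at ht
    exact (mem_divChains hn).2 (isDivChain_snoc.2 ⟨ht, hdn⟩)
  · intro s _; exact Fin.snoc_init_self s
  · intro x _; simp
  · intro s _; simp [Fin.prod_univ_castSucc, Fin.init, mul_comm]

section GaussRatio

variable {K : Type*} [Field K] (q : K)

/-- `gaussRatio q p m` is the Gaussian binomial coefficient `[m + p - 1, m]_q`. -/
def gaussRatio (p m : ℕ) : K :=
  (∏ i ∈ range m, (q ^ (p + i) - 1)) / ∏ i ∈ range m, (q ^ (i + 1) - 1)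

lemma gaussRatio_one_left {q : K} (hq : ∀ k, q ^ (k + 1) ≠ 1) (m : ℕ) :
    gaussRatio q 1 m = 1 := by
  rw [gaussRatio]
  simp_rw [add_comm 1]
  exact div_self (prod_ne_zero_iff.2 fun k _ => sub_ne_zero.2 (hq k))

lemma gaussRatio_succ_right (p m : ℕ) :
    gaussRatio q p (m + 1) = gaussRatio q p m * ((q ^ (p + m) - 1) / (q ^ (m + 1) - 1)) := by
  rw [gaussRatio, gaussRatio, prod_range_succ, prod_range_succ, mul_div_mul_comm]

lemma gaussRatio_succ_right_eq_mul_succ_left (p m : ℕ) :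
    gaussRatio q p (m + 1) = gaussRatio q (p + 1) m * ((q ^ p - 1) / (q ^ (m + 1) - 1)) := by
  rw [gaussRatio, gaussRatio, prod_range_succ', prod_range_succ, mul_div_mul_comm]
  simp only [add_assoc, add_comm 1, add_zero]

lemma gaussRatio_pascal {q : K} {m : ℕ} (hq : q ^ (m + 1) ≠ 1) (p : ℕ) :
    gaussRatio q (p + 1) (m + 1) =
      gaussRatio q (p + 1) m + q ^ (m + 1) * gaussRatio q p (m + 1) := by
  have h : q ^ (m + 1) - 1 ≠ 0 := sub_ne_zero.2 hq
  rw [gaussRatio_succ_right, gaussRatio_succ_right_eq_mul_succ_left]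
  field_simp
  ring

lemma sum_pow_mul_gaussRatio {q : K} (hq : ∀ k, q ^ (k + 1) ≠ 1) (p m : ℕ) :
    ∑ j ∈ range (m + 1), q ^ j * gaussRatio q p j = gaussRatio q (p + 1) m := by
  induction m with
  | zero => simp [gaussRatio]
  | succ m ih => rw [sum_range_succ, ih, gaussRatio_pascal (hq m)]

end GaussRatio

theorem stmt2 (p : ℕ) (hp : 1 ≤ p) (q : ℕ) (hq : q.Prime) (m : ℕ) :
    (B p (q ^ m) : ℚ) =
      (∏ i ∈ Finset.range m, ((q : ℚ) ^ (p + i) - 1)) /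
        (∏ i ∈ Finset.range m, ((q : ℚ) ^ (i + 1) - 1)) := by
  have hq_pow : ∀ k, (q : ℚ) ^ (k + 1) ≠ 1 := fun k =>
    (one_lt_pow₀ (by exact_mod_cast hq.one_lt) k.succ_ne_zero).ne'
  obtain ⟨k, rfl⟩ := Nat.exists_eq_add_of_le' hp
  clear hp
  change (B (k + 1) (q ^ m) : ℚ) = gaussRatio (q : ℚ) (k + 1) m
  induction k generalizing m with
  | zero => rw [B_one, Nat.cast_one, gaussRatio_one_left hq_pow]
  | succ k ih =>
    rw [B_succ_succ k _ (pow_ne_zero m hq.ne_zero), Nat.sum_divisors_prime_pow hq,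
      ← sum_pow_mul_gaussRatio hq_pow]
    push_cast
    simp only [ih]
end

section
/- For every p ≥ 1 and n ≥ 1, B(p,n) = Σ_{d_1·d_2·⋯·d_p = n} d_1^{p−1}·d_2^{p−2}·⋯·d_{p−1}, where the sum is over all p-tuples of positive integers whose product is n. -/
namespace Stmt3Aux

def Ew (q n : ℕ) (s : Fin q → ℕ) (k : ℕ) : ℕ :=
  if k = 0 then 1 else if h : k - 1 < q then s ⟨k - 1, h⟩ else n

def Fw (q n : ℕ) (s : Fin q → ℕ) (i : Fin (q + 1)) : ℕ :=
  Ew q n s (i.val + 1) / Ew q n s i.val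

def Pw (q : ℕ) (d : Fin (q + 1) → ℕ) (m : ℕ) : ℕ :=
  ∏ k : Fin (q + 1), if k.val < m then d k else 1

def Gw (q : ℕ) (d : Fin (q + 1) → ℕ) (i : Fin q) : ℕ := Pw q d (i.val + 1)

variable {q n : ℕ} {s : Fin q → ℕ} {d : Fin (q + 1) → ℕ}

lemma Ew_top : Ew q n s (q + 1) = n := by simp [Ew]

lemma Ew_dvd_n (hmem : ∀ i, s i ∈ n.divisors) (k : ℕ) :
    Ew q n s k ∣ n := by
  unfold Ew
  split
  · exact one_dvd n
  · split
    · exact (Nat.mem_divisors.mp (hmem _)).1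
    · exact dvd_rfl

lemma Ew_dvd_succ
    (hs : ∀ i : Fin q, s i ∣ if h : i.val + 1 < q then s ⟨i.val + 1, h⟩ else n)
    (k : ℕ) : Ew q n s k ∣ Ew q n s (k + 1) := by
  unfold Ew
  rcases k with _ | k
  · simp
  · simp only [Nat.succ_ne_zero, if_false, Nat.add_sub_cancel]
    by_cases h : k < q
    · have := hs ⟨k, h⟩
      simp only at this
      rw [dif_pos h]
      by_cases h2 : k + 1 < q
      · rw [dif_pos h2]; rw [dif_pos h2] at this; exact this
      · rw [dif_neg h2]; rw [dif_neg h2] at this; exact this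
    · rw [dif_neg h, dif_neg (by omega)]

lemma Pw_zero : Pw q d 0 = 1 := by simp [Pw]

lemma Pw_succ {m : ℕ} (h : m < q + 1) :
    Pw q d (m + 1) = Pw q d m * d ⟨m, h⟩ := by
  unfold Pw
  have : ∀ k : Fin (q + 1), (if k.val < m + 1 then d k else 1) =
      (if k.val < m then d k else 1) * (if k = ⟨m, h⟩ then d k else 1) := by
    intro k
    rcases lt_trichotomy k.val m with h1 | h1 | h1
    · rw [if_pos (by omega), if_pos h1, if_neg (by simp [Fin.ext_iff]; omega), mul_one]
    · rw [if_pos (by omega), if_neg (by omega), if_pos (by simp [Fin.ext_iff, h1]), one_mul]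
    · rw [if_neg (by omega), if_neg (by omega), if_neg (by simp [Fin.ext_iff]; omega), mul_one]
  rw [Finset.prod_congr rfl (fun k _ => this k), Finset.prod_mul_distrib,
    Finset.prod_ite_eq' Finset.univ (⟨m, h⟩ : Fin (q + 1)) d, if_pos (Finset.mem_univ _)]

lemma Pw_top : Pw q d (q + 1) = ∏ k, d k := by
  unfold Pw
  exact Finset.prod_congr rfl fun k _ => if_pos k.isLt

lemma Pw_ne_zero (hd : ∀ k, d k ≠ 0) (m : ℕ) : Pw q d m ≠ 0 := by
  unfold Pw
  exact Finset.prod_ne_zero_iff.mpr fun k _ => by split <;> simp [hd k]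

lemma Pw_dvd_prod (m : ℕ) : Pw q d m ∣ ∏ k, d k := by
  unfold Pw
  exact Finset.prod_dvd_prod_of_dvd _ _ fun k _ => by split <;> simp

lemma PF_eq_E (hmem : ∀ i, s i ∈ n.divisors)
    (hs : ∀ i : Fin q, s i ∣ if h : i.val + 1 < q then s ⟨i.val + 1, h⟩ else n) :
    ∀ m, m ≤ q + 1 → Pw q (Fw q n s) m = Ew q n s m := by
  intro m
  induction m with
  | zero => intro _; simp [Pw_zero, Ew]
  | succ m ih =>
    intro hm
    rw [Pw_succ (by omega), ih (by omega)]
    show Ew q n s m * (Ew q n s (m + 1) / Ew q n s m) = Ew q n s (m + 1)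
    exact Nat.mul_div_cancel' (Ew_dvd_succ hs m)

lemma E_eq_Pd (hprod : ∏ k, d k = n) :
    ∀ m, m ≤ q + 1 → Ew q n (Gw q d) m = Pw q d m := by
  intro m _
  rcases m with _ | m
  · simp [Ew, Pw_zero]
  · unfold Ew
    rw [if_neg (Nat.succ_ne_zero m)]
    simp only [Nat.add_sub_cancel]
    by_cases h : m < q
    · rw [dif_pos h]; rfl
    · rw [dif_neg h]
      have : m + 1 = q + 1 := by omega
      rw [this, Pw_top, hprod]

lemma card_aux (k : Fin (q + 1)) :
    (Finset.univ.filter fun i : Fin q => k.val < i.val + 1).card = q - k.val := by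
  by_cases h : k.val < q
  · have : (Finset.univ.filter fun i : Fin q => k.val < i.val + 1) =
        Finset.Ici (⟨k.val, h⟩ : Fin q) := by
      ext i
      simp [Fin.le_def]
    rw [this, Fin.card_Ici]
  · have h1 : (Finset.univ.filter fun i : Fin q => k.val < i.val + 1) = ∅ := by
      apply Finset.filter_eq_empty_iff.mpr
      intro i _
      omega
    rw [h1, Finset.card_empty]
    omega

lemma valeq (d : Fin (q + 1) → ℕ) :
    ∏ i : Fin q, Pw q d (i.val + 1) = ∏ k : Fin (q + 1), d k ^ (q - k.val) := by
  unfold Pw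
  rw [Finset.prod_comm]
  refine Finset.prod_congr rfl fun k _ => ?_
  rw [Finset.prod_ite, Finset.prod_const_one, mul_one, Finset.prod_const, card_aux]

lemma main (q n : ℕ) (hn : n ≠ 0) :
    ∑ s ∈ Finset.filter
        (fun s : Fin q → ℕ =>
          ∀ i : Fin q, s i ∣ if h : i.val + 1 < q then s ⟨i.val + 1, h⟩ else n)
        (Fintype.piFinset fun _ => n.divisors),
      ∏ i, s i =
    ∑ d ∈ Finset.filter (fun d : Fin (q + 1) → ℕ => ∏ i, d i = n)
        (Fintype.piFinset fun _ => n.divisors),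
      ∏ i : Fin (q + 1), d i ^ (q - i.val) := by
  refine Finset.sum_nbij' (Fw q n) (Gw q) ?_ ?_ ?_ ?_ ?_
  · -- Fw maps into target
    intro s hs
    rw [Finset.mem_filter, Fintype.mem_piFinset] at hs ⊢
    obtain ⟨hmem, hchain⟩ := hs
    have hprod : ∏ k, Fw q n s k = n := by
      rw [← Pw_top, PF_eq_E hmem hchain (q + 1) le_rfl, Ew_top]
    refine ⟨fun k => ?_, hprod⟩
    rw [Nat.mem_divisors]
    refine ⟨?_, hn⟩
    have h1 : Fw q n s k ∣ Ew q n s (k.val + 1) :=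
      Nat.div_dvd_of_dvd (Ew_dvd_succ hchain k.val)
    exact h1.trans (Ew_dvd_n hmem _)
  · -- Gw maps into source
    intro d hd
    rw [Finset.mem_filter, Fintype.mem_piFinset] at hd ⊢
    obtain ⟨hmem, hprod⟩ := hd
    have hGdvd : ∀ m, Pw q d m ∣ n := fun m => hprod ▸ Pw_dvd_prod m
    refine ⟨fun i => Nat.mem_divisors.mpr ⟨hGdvd _, hn⟩, fun i => ?_⟩
    by_cases h : i.val + 1 < q
    · rw [dif_pos h]
      show Pw q d (i.val + 1) ∣ Pw q d (i.val + 1 + 1)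
      rw [Pw_succ (m := i.val + 1) (by omega)]
      exact dvd_mul_right _ _
    · rw [dif_neg h]
      exact hGdvd _
  · -- left inverse
    intro s hs
    rw [Finset.mem_filter, Fintype.mem_piFinset] at hs
    obtain ⟨hmem, hchain⟩ := hs
    funext i
    show Pw q (Fw q n s) (i.val + 1) = s i
    rw [PF_eq_E hmem hchain (i.val + 1) (by omega)]
    unfold Ew
    rw [if_neg (Nat.succ_ne_zero _)]
    simp only [Nat.add_sub_cancel]
    rw [dif_pos i.isLt]
  · -- right inverse
    intro d hd
    rw [Finset.mem_filter, Fintype.mem_piFinset] at hd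
    obtain ⟨hmem, hprod⟩ := hd
    have hd0 : ∀ k, d k ≠ 0 := fun k => (Nat.pos_of_mem_divisors (hmem k)).ne'
    funext k
    show Ew q n (Gw q d) (k.val + 1) / Ew q n (Gw q d) k.val = d k
    rw [E_eq_Pd hprod (k.val + 1) (by omega), E_eq_Pd hprod k.val (by omega),
      Pw_succ k.isLt, Nat.mul_div_cancel_left _ (Nat.pos_of_ne_zero (Pw_ne_zero hd0 _))]
  · -- values agree
    intro s hs
    rw [Finset.mem_filter, Fintype.mem_piFinset] at hs
    obtain ⟨hmem, hchain⟩ := hs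
    rw [← valeq (Fw q n s)]
    refine Finset.prod_congr rfl fun i _ => ?_
    rw [PF_eq_E hmem hchain (i.val + 1) (by omega)]
    unfold Ew
    rw [if_neg (Nat.succ_ne_zero _)]
    simp only [Nat.add_sub_cancel]
    rw [dif_pos i.isLt]

end Stmt3Aux

theorem stmt3 (p n : ℕ) (hp : 1 ≤ p) (hn : 1 ≤ n) :
    B p n =
      ∑ d ∈ Finset.filter (fun d : Fin p → ℕ => ∏ i, d i = n)
          (Fintype.piFinset fun _ => n.divisors),
        ∏ i : Fin p, d i ^ (p - 1 - i.val) := by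
  obtain ⟨q, rfl⟩ : ∃ q, p = q + 1 := ⟨p - 1, (Nat.succ_pred_eq_of_pos hp).symm⟩
  simp only [B, Nat.add_sub_cancel]
  exact Stmt3Aux.main q n (by omega)
end

section
/- Let p ≥ 1, n ≥ 1, and let X = {X_1,...,X_r} be a set partition of [n] into r blocks each of cardinality s (so n = r·s). Then the number of (p+1)-tuples (σ_1,...,σ_{p+1}) of pairwise commuting permutations of [n] such that ⟨σ_1,...,σ_{p+1}⟩ acts transitively on [n] and such that the set of orbits of ⟨σ_1,...,σ_p⟩ is exactly X equals A(p,s,1) · (r−1)! · (s!)^{r−1} · s. -/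
/-!
Identify `[n]` with `Fin r × Fin s` so that the blocks of `X` become the rows. The last
permutation `ρ` commutes with the first `p`, hence permutes their orbits, the rows, and
transitivity forces it to cycle through all `r` rows. Listing the rows in the order in which `ρ`
visits them, starting from row `0`, and identifying the `k`-th of them with row `0` through
`ρ ^ k` conjugates the tuple into a standard form: the first `p` permutations act on every row as
one commuting transitive tuple `τ` on `Fin s`, and `ρ` moves each row to the next, acting by some
`h` on the way back to row `0`; `h` must lie in the centralizer of `τ`. Conversely every choice of ordering, identifications, `τ` and `h` gives
a valid tuple. The orderings contribute `(r - 1)!`, the identifications `(s!) ^ (r - 1)`, the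
tuples `τ` give `A(p, s, 1)`, and `h` contributes `s`, because the centralizer of a transitive
abelian permutation group is regular.
-/

/-- `A p n k` is the number of `p`-tuples of pairwise commuting permutations of
`{1,…,n}` whose generated subgroup acts on `{1,…,n}` with exactly `k` orbits. -/
noncomputable def A (p n k : ℕ) : ℕ :=
  Nat.card {σ : Fin p → Equiv.Perm (Fin n) //
    (∀ i j, Commute (σ i) (σ j)) ∧
    Nat.card (MulAction.orbitRel.Quotient
      (Subgroup.closure (Set.range σ)) (Fin n)) = k}

open Equiv Subgroup Function MulAction

theorem Finpartition.exists_equiv_prod {β : Type*} [Fintype β] [DecidableEq β]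
    (X : Finpartition (Finset.univ : Finset β)) {r s : ℕ} (hr : X.parts.card = r)
    (hs : ∀ b ∈ X.parts, b.card = s) :
    ∃ E : β ≃ Fin r × Fin s, ∀ x y, (E x).1 = (E y).1 ↔ X.part x = X.part y := by
  let part : β → X.parts := fun x => ⟨X.part x, X.part_mem.2 (Finset.mem_univ x)⟩
  have hfiber : ∀ b : X.parts, Fintype.card {x // part x = b} = s := fun b => by
    rw [← hs b b.2, ← Fintype.card_coe]
    refine Fintype.card_congr (Equiv.subtypeEquivRight fun x => ?_)
    rw [← Subtype.coe_inj, X.part_eq_iff_mem b.2]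
  let E : β ≃ Fin r × Fin s :=
    (sigmaFiberEquiv part).symm.trans <|
      (sigmaEquivProdOfEquiv fun b => Fintype.equivFinOfCardEq (hfiber b)).trans <|
        prodCongr (Fintype.equivFinOfCardEq (by rw [Fintype.card_coe, hr])) (Equiv.refl _)
  refine ⟨E, fun x y => ?_⟩
  simp [E, sigmaEquivProdOfEquiv, part]

theorem Equiv.Perm.minimalPeriod_eq_card_of_surjective_zpow_apply {α : Type*} [Fintype α]
    (π : Perm α) {x : α} (h : Surjective fun k : ℤ => (π ^ k) x) :
    minimalPeriod π x = Fintype.card α := by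
  classical
  have horb : orbit (zpowers π) x = _root_.Set.univ :=
    _root_.Set.eq_univ_of_forall fun a => by
      obtain ⟨k, hk⟩ := h a
      exact ⟨⟨π ^ k, k, rfl⟩, hk⟩
  have := MulAction.minimalPeriod_eq_card π x
  simp only [Perm.smul_def] at this
  rw [this, Fintype.card_congr ((Equiv.setCongr horb).trans (Equiv.Set.univ α))]

theorem Equiv.Perm.exists_perm_eq_pow_apply_zero {m : ℕ} (π : Perm (Fin (m + 1)))
    (h : Surjective fun k : ℤ => (π ^ k) 0) :
    ∃ e : Perm (Fin (m + 1)), (∀ j : Fin (m + 1), (π ^ (j : ℕ)) 0 = e j) ∧ (π ^ (m + 1)) 0 = 0 := by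
  have hper := π.minimalPeriod_eq_card_of_surjective_zpow_apply h
  rw [Fintype.card_fin] at hper
  have hinj : Injective fun j : Fin (m + 1) => (π ^ (j : ℕ)) 0 := fun j j' hjj' =>
    Fin.ext <| iterate_injOn_Iio_minimalPeriod (f := π) (x := 0)
      (by rw [Set.mem_Iio, hper]; exact j.isLt) (by rw [Set.mem_Iio, hper]; exact j'.isLt)
      (by simpa [Perm.iterate_eq_pow] using hjj')
  refine ⟨Equiv.ofBijective _ hinj.bijective_of_finite, fun j => rfl, ?_⟩
  have := iterate_minimalPeriod (f := π) (x := 0)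
  rwa [hper, Perm.iterate_eq_pow] at this

theorem Equiv.Perm.card_fixing_zero (m : ℕ) :
    Nat.card {e : Perm (Fin (m + 1)) // e 0 = 0} = m.factorial := by
  have h := (stabilizer (Perm (Fin (m + 1))) (0 : Fin (m + 1))).card_mul_index
  rw [index_stabilizer, orbit_eq_univ, Set.ncard_univ, Nat.card_perm, Nat.card_fin,
    Nat.factorial_succ, mul_comm] at h
  exact Nat.eq_of_mul_eq_mul_left (Nat.succ_pos m) h

namespace BlockTransitive

section Connects

variable {β γ : Type*}

def Connects (S : Set (Perm β)) (x y : β) : Prop :=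
  ∃ g ∈ closure S, g x = y

theorem connects_of_mem_closure {S : Set (Perm β)} {g : Perm β} (hg : g ∈ closure S) (x : β) :
    Connects S x (g x) :=
  ⟨g, hg, rfl⟩

theorem Connects.trans {S : Set (Perm β)} {x y z : β} (hxy : Connects S x y)
    (hyz : Connects S y z) : Connects S x z := by
  obtain ⟨g, hg, rfl⟩ := hxy
  obtain ⟨g', hg', rfl⟩ := hyz
  exact ⟨g' * g, mul_mem hg' hg, rfl⟩

theorem Connects.symm {S : Set (Perm β)} {x y : β} (h : Connects S x y) : Connects S y x := by
  obtain ⟨g, hg, rfl⟩ := h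
  exact ⟨g⁻¹, inv_mem hg, by simp⟩

theorem Connects.mono {S T : Set (Perm β)} (hST : S ⊆ T) {x y : β} (h : Connects S x y) :
    Connects T x y := by
  obtain ⟨g, hg, rfl⟩ := h
  exact ⟨g, closure_mono hST hg, rfl⟩

theorem mem_orbit_closure_iff {S : Set (Perm β)} {x y : β} :
    y ∈ orbit (closure S) x ↔ Connects S x y := by
  simp [Connects, mem_orbit_iff, Subgroup.smul_def, Perm.smul_def]

theorem card_orbitRel_quotient_closure_eq_one_iff [Nonempty β] (S : Set (Perm β)) :
    Nat.card (orbitRel.Quotient (closure S) β) = 1 ↔ ∀ x y, Connects S x y := by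
  rw [Nat.card_eq_one_iff_unique, ← pretransitive_iff_subsingleton_quotient, isPretransitive_iff]
  have : Nonempty (orbitRel.Quotient (closure S) β) := ⟨Quotient.mk'' (Classical.arbitrary β)⟩
  simp only [this, and_true]
  simp only [← mem_orbit_closure_iff, mem_orbit_iff]

theorem connects_permCongr_iff {ι : Type*} (E : β ≃ γ) (σ : ι → Perm β) (x y : β) :
    Connects (Set.range fun i => E.permCongr (σ i)) (E x) (E y) ↔ Connects (Set.range σ) x y := by
  have hcl : closure (Set.range fun i => E.permCongr (σ i)) =
      (closure (Set.range σ)).map E.permCongrHom.toMonoidHom := by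
    rw [MonoidHom.map_closure, ← Set.range_comp]; rfl
  simp only [Connects, hcl, Subgroup.mem_map, MulEquiv.coe_toMonoidHom, exists_exists_and_eq_and,
    permCongrHom_coe, permCongr_apply, symm_apply_apply, E.apply_eq_iff_eq]

theorem parts_eq_orbits_iff [Fintype β] [DecidableEq β]
    (X : Finpartition (Finset.univ : Finset β)) (S : Set (Perm β)) :
    (∀ b : Finset β, b ∈ X.parts ↔ ∃ x, (b : Set β) = orbit (closure S) x) ↔
      ∀ x y, Connects S x y ↔ X.part x = X.part y := by
  have hpart : ∀ x y : β, y ∈ X.part x ↔ X.part x = X.part y := fun x y => by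
    rw [X.mem_part_iff_part_eq_part (Finset.mem_univ _) (Finset.mem_univ _), eq_comm]
  constructor
  · intro h x y
    obtain ⟨x₀, hx₀⟩ := (h (X.part x)).1 (X.part_mem.2 (Finset.mem_univ x))
    have horb : orbit (closure S) x = X.part x := by
      rw [hx₀, orbit_eq_iff, ← hx₀]
      exact X.mem_part (Finset.mem_univ x)
    rw [← mem_orbit_closure_iff, horb, Finset.mem_coe, hpart]
  · intro h
    have horb : ∀ x, orbit (closure S) x = X.part x := fun x => by
      ext y; rw [mem_orbit_closure_iff, h, Finset.mem_coe, hpart]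
    intro b
    constructor
    · intro hb
      obtain ⟨x, hx⟩ := X.nonempty_of_mem_parts hb
      exact ⟨x, by rw [horb, X.part_eq_of_mem hb hx]⟩
    · rintro ⟨x, hx⟩
      rw [horb, Finset.coe_inj] at hx
      exact hx ▸ X.part_mem.2 (Finset.mem_univ x)

theorem apply_eq_of_mem_centralizer {S : Set (Perm β)} (hS : ∀ x y, Connects S x y)
    {h h' : Perm β} (hh : h ∈ centralizer S) (hh' : h' ∈ centralizer S) {x₀ : β}
    (h₀ : h x₀ = h' x₀) : h = h' := by
  rw [← centralizer_closure] at hh hh'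
  ext y
  obtain ⟨g, hg, rfl⟩ := hS x₀ y
  rw [← Perm.mul_apply, ← mem_centralizer_iff.1 hh g hg, Perm.mul_apply, h₀, ← Perm.mul_apply,
    mem_centralizer_iff.1 hh' g hg, Perm.mul_apply]

noncomputable def centralizerEquivOfTransitive {ι : Type*} (τ : ι → Perm β)
    (hcomm : ∀ i j, Commute (τ i) (τ j)) (htrans : ∀ x y, Connects (Set.range τ) x y) (x₀ : β) :
    centralizer (Set.range τ) ≃ β := by
  refine Equiv.ofBijective (fun h => h.1 x₀) ⟨fun h h' hx => Subtype.ext ?_, fun y => ?_⟩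
  · exact apply_eq_of_mem_centralizer htrans h.2 h'.2 hx
  · obtain ⟨g, hg, rfl⟩ := htrans x₀ y
    have hle : closure (Set.range τ) ≤ centralizer (Set.range τ) := by
      rw [closure_le]
      rintro _ ⟨i, rfl⟩
      exact mem_centralizer_iff.2 fun _ ⟨j, hj⟩ => hj ▸ (hcomm j i).eq
    exact ⟨⟨g, hle hg⟩, rfl⟩

end Connects

section Transport

variable {β γ ι κ : Type*} {p : ℕ}

structure IsBlockTransitive (f : β → ι) (σ : Fin (p + 1) → Perm β) : Prop where
  commute : ∀ i j, Commute (σ i) (σ j)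
  connects : ∀ x y, Connects (Set.range σ) x y
  connects_castSucc_iff : ∀ x y, Connects (Set.range fun i : Fin p => σ i.castSucc) x y ↔ f x = f y

theorem isBlockTransitive_part_iff [Fintype β] [DecidableEq β]
    (X : Finpartition (Finset.univ : Finset β)) (σ : Fin (p + 1) → Perm β) :
    ((∀ i j, Commute (σ i) (σ j)) ∧ (∀ x y, ∃ g ∈ closure (Set.range σ), g x = y) ∧
        ∀ b : Finset β, b ∈ X.parts ↔
          ∃ x, (b : Set β) = orbit (closure (Set.range fun i : Fin p => σ i.castSucc)) x) ↔
      IsBlockTransitive X.part σ := by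
  rw [parts_eq_orbits_iff]
  exact ⟨fun ⟨h₁, h₂, h₃⟩ => ⟨h₁, h₂, h₃⟩, fun ⟨h₁, h₂, h₃⟩ => ⟨h₁, h₂, h₃⟩⟩

theorem isBlockTransitive_permCongr_iff (E : β ≃ γ) {f : β → ι} {f' : γ → κ}
    (hf : ∀ x y, f' (E x) = f' (E y) ↔ f x = f y) (σ : Fin (p + 1) → Perm β) :
    IsBlockTransitive f' (fun i => E.permCongr (σ i)) ↔ IsBlockTransitive f σ := by
  have hcomm : ∀ i j, Commute (E.permCongr (σ i)) (E.permCongr (σ j)) ↔ Commute (σ i) (σ j) :=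
    fun i j => by
      simpa only [permCongrHom_coe] using
        commute_map_iff (f := E.permCongrHom) E.permCongrHom.injective
  constructor
  · rintro ⟨h₁, h₂, h₃⟩
    refine ⟨fun i j => (hcomm i j).1 (h₁ i j), fun x y => ?_, fun x y => ?_⟩
    · exact (connects_permCongr_iff E σ x y).1 (h₂ _ _)
    · rw [← hf, ← h₃, connects_permCongr_iff E (fun i : Fin p => σ i.castSucc)]
  · rintro ⟨h₁, h₂, h₃⟩
    refine ⟨fun i j => (hcomm i j).2 (h₁ i j), E.surjective.forall₂.2 fun x y => ?_,
      E.surjective.forall₂.2 fun x y => ?_⟩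
    · exact (connects_permCongr_iff E σ x y).2 (h₂ _ _)
    · rw [hf, ← h₃, ← connects_permCongr_iff E (fun i : Fin p => σ i.castSucc)]

def isBlockTransitiveEquiv (E : β ≃ γ) {f : β → ι} {f' : γ → κ}
    (hf : ∀ x y, f' (E x) = f' (E y) ↔ f x = f y) :
    {σ : Fin (p + 1) → Perm β // IsBlockTransitive f σ} ≃
      {σ : Fin (p + 1) → Perm γ // IsBlockTransitive f' σ} :=
  Equiv.subtypeEquiv (Equiv.piCongrRight fun _ => E.permCongr) fun σ =>
    (isBlockTransitive_permCongr_iff E hf σ).symm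

end Transport

section Model

variable {κ : Type*} {m p : ℕ}

def rowHom (ι : Type*) : Perm κ →* Perm (ι × κ) where
  toFun g := prodCongr (Equiv.refl ι) g
  map_one' := rfl
  map_mul' _ _ := rfl

@[simp] theorem rowHom_apply (ι : Type*) (g : Perm κ) (a : ι) (y : κ) :
    rowHom ι g (a, y) = (a, g y) := rfl

theorem rowHom_injective (ι : Type*) [Nonempty ι] : Injective (rowHom (κ := κ) ι) := by
  intro g g' h
  ext y
  simpa using congrArg (fun k : Perm (ι × κ) => (k (Classical.arbitrary ι, y)).2) h

theorem connects_rowHom_iff {ι : Type*} (τ : ι → Perm κ) (a b : Fin (m + 1)) (x y : κ) :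
    Connects (Set.range fun i => rowHom (Fin (m + 1)) (τ i)) (a, x) (b, y) ↔
      a = b ∧ Connects (Set.range τ) x y := by
  have hcl : closure (Set.range fun i => rowHom (Fin (m + 1)) (τ i)) =
      (closure (Set.range τ)).map (rowHom _) := by
    rw [MonoidHom.map_closure, ← Set.range_comp]; rfl
  simp only [Connects, hcl, Subgroup.mem_map, exists_exists_and_eq_and, rowHom_apply,
    Prod.mk.injEq]
  constructor
  · rintro ⟨g, hg, rfl, rfl⟩; exact ⟨rfl, g, hg, rfl⟩
  · rintro ⟨rfl, g, hg, rfl⟩; exact ⟨g, hg, rfl, rfl⟩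

def shift (h : Perm κ) : Perm (Fin (m + 1) × κ) :=
  prodShear (Equiv.addRight 1) fun j => if j = Fin.last m then h else 1

theorem shift_apply_of_ne (h : Perm κ) {j : Fin (m + 1)} (hj : j ≠ Fin.last m) (y : κ) :
    shift h (j, y) = (j + 1, y) := by
  simp [shift, hj]

@[simp] theorem shift_apply_last (h : Perm κ) (y : κ) : shift h (Fin.last m, y) = (0, h y) := by
  simp [shift]

theorem shift_pow_apply_zero (h : Perm κ) (j : Fin (m + 1)) (y : κ) :
    (shift h ^ (j : ℕ)) ((0 : Fin (m + 1)), y) = (j, y) := by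
  induction j using Fin.induction with
  | zero => rfl
  | succ j ih =>
    rw [Fin.val_succ, pow_succ', Perm.mul_apply, ← Fin.val_castSucc, ih,
      shift_apply_of_ne h (Fin.castSucc_lt_last j).ne, Fin.coeSucc_eq_succ]

theorem commute_shift_rowHom_iff (h g : Perm κ) :
    Commute (shift (m := m) h) (rowHom _ g) ↔ Commute h g := by
  constructor
  · intro hc
    ext y
    simpa using congrArg (fun k : Perm (Fin (m + 1) × κ) => (k (Fin.last m, y)).2) hc.eq
  · intro hc
    refine Equiv.ext fun ⟨j, y⟩ => ?_
    by_cases hj : j = Fin.last m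
    · subst hj
      simpa using congrArg (fun k : Perm κ => ((0 : Fin (m + 1)), k y)) hc.eq
    · simp [shift_apply_of_ne h hj]

def stdTuple (τ : Fin p → Perm κ) (h : Perm κ) : Fin (p + 1) → Perm (Fin (m + 1) × κ) :=
  Fin.lastCases (shift h) fun i => rowHom _ (τ i)

@[simp] theorem stdTuple_last (τ : Fin p → Perm κ) (h : Perm κ) :
    stdTuple (m := m) τ h (Fin.last p) = shift h := by
  simp [stdTuple]

@[simp] theorem stdTuple_castSucc (τ : Fin p → Perm κ) (h : Perm κ) (i : Fin p) :
    stdTuple (m := m) τ h i.castSucc = rowHom _ (τ i) := by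
  simp [stdTuple]

theorem commute_stdTuple_iff (τ : Fin p → Perm κ) (h : Perm κ) :
    (∀ i j, Commute (stdTuple (m := m) τ h i) (stdTuple τ h j)) ↔
      (∀ i j, Commute (τ i) (τ j)) ∧ ∀ i, Commute h (τ i) := by
  have hrow : ∀ i j, Commute (rowHom (Fin (m + 1)) (τ i)) (rowHom _ (τ j)) ↔ Commute (τ i) (τ j) :=
    fun i j => commute_map_iff (rowHom_injective _)
  constructor
  · intro hc
    refine ⟨fun i j => ?_, fun i => ?_⟩
    · simpa [hrow] using hc i.castSucc j.castSucc
    · simpa [commute_shift_rowHom_iff] using hc (Fin.last p) i.castSucc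
  · rintro ⟨hτ, hh⟩ i j
    induction i using Fin.lastCases with
    | last =>
      induction j using Fin.lastCases with
      | last => exact Commute.refl _
      | cast j => simpa [commute_shift_rowHom_iff] using hh j
    | cast i =>
      induction j using Fin.lastCases with
      | last => simpa using ((commute_shift_rowHom_iff h (τ i)).2 (hh i)).symm
      | cast j => simpa [hrow] using hτ i j

theorem isBlockTransitive_stdTuple_iff (τ : Fin p → Perm κ) (h : Perm κ) :
    IsBlockTransitive Prod.fst (stdTuple (m := m) τ h) ↔
      ((∀ i j, Commute (τ i) (τ j)) ∧ ∀ x y, Connects (Set.range τ) x y) ∧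
        h ∈ centralizer (Set.range τ) := by
  have hblocks : ∀ (a b : Fin (m + 1)) (x y : κ),
      Connects (Set.range fun i : Fin p => stdTuple (m := m) τ h i.castSucc) (a, x) (b, y) ↔
        a = b ∧ Connects (Set.range τ) x y := by
    simpa only [stdTuple_castSucc] using connects_rowHom_iff τ
  have hcent : h ∈ centralizer (Set.range τ) ↔ ∀ i, Commute h (τ i) := by
    simp [mem_centralizer_iff, commute_iff_eq, eq_comm]
  rw [hcent]
  constructor
  · rintro ⟨hc, -, hb⟩
    obtain ⟨hτ, hh⟩ := (commute_stdTuple_iff τ h).1 hc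
    exact ⟨⟨hτ, fun x y => ((hblocks 0 0 x y).1 ((hb (0, x) (0, y)).2 rfl)).2⟩, hh⟩
  · rintro ⟨⟨hτ, htrans⟩, hh⟩
    refine ⟨(commute_stdTuple_iff τ h).2 ⟨hτ, hh⟩, fun ⟨a, x⟩ ⟨b, y⟩ => ?_,
      fun ⟨a, x⟩ ⟨b, y⟩ => by rw [hblocks]; simp [htrans]⟩
    have hshift : shift h ∈ closure (Set.range (stdTuple (m := m) τ h)) :=
      subset_closure ⟨Fin.last p, stdTuple_last τ h⟩
    have hrows : Set.range (fun i : Fin p => stdTuple (m := m) τ h i.castSucc) ⊆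
        Set.range (stdTuple τ h) := Set.range_comp_subset_range _ _
    have hpow : ∀ c : Fin (m + 1), ∀ z : κ,
        Connects (Set.range (stdTuple (m := m) τ h)) (0, z) (c, z) := fun c z => by
      simpa [shift_pow_apply_zero] using connects_of_mem_closure (pow_mem hshift c) (0, z)
    exact ((hpow a x).symm.trans (((hblocks 0 0 x y).2 ⟨rfl, htrans x y⟩).mono hrows)).trans
      (hpow b y)

def frame (e : Perm (Fin (m + 1))) (F : Fin m → Perm κ) : Perm (Fin (m + 1) × κ) :=
  prodShear e (Fin.cons 1 F)

theorem frame_apply (e : Perm (Fin (m + 1))) (F : Fin m → Perm κ) (j : Fin (m + 1)) (y : κ) :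
    frame e F (j, y) = (e j, (Fin.cons 1 F : Fin (m + 1) → Perm κ) j y) := rfl

theorem fst_frame_apply_eq_iff (e : Perm (Fin (m + 1))) (F : Fin m → Perm κ)
    (z w : Fin (m + 1) × κ) : (frame e F z).1 = (frame e F w).1 ↔ z.1 = w.1 :=
  e.injective.eq_iff

theorem frame_apply_eq_pow {e : Perm (Fin (m + 1))} (he : e 0 = 0) (F : Fin m → Perm κ)
    (h : Perm κ) (j : Fin (m + 1)) (y : κ) :
    frame e F (j, y) = ((frame e F).permCongr (shift h) ^ (j : ℕ)) (0, y) := by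
  have h0 : (frame e F).symm (0, y) = (0, y) := by
    rw [symm_apply_eq, frame_apply, he]; rfl
  rw [← permCongrHom_coe, ← map_pow, permCongrHom_coe, permCongr_apply, h0, shift_pow_apply_zero]

theorem frame_injective [Nonempty κ] {e e' : Perm (Fin (m + 1))} {F F' : Fin m → Perm κ}
    (h : frame e F = frame e' F') : e = e' ∧ F = F' := by
  obtain ⟨y₀⟩ := ‹Nonempty κ›
  refine ⟨Equiv.ext fun j => congrArg Prod.fst (congrFun (congrArg DFunLike.coe h) (j, y₀)),
    funext fun k => Equiv.ext fun y => ?_⟩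
  simpa [frame_apply] using congrArg Prod.snd (congrFun (congrArg DFunLike.coe h) (k.succ, y))

noncomputable def fiberPerm {ι : Type*} [Finite κ] (g : Perm (ι × κ)) (a b : ι)
    (hg : ∀ y, (g (a, y)).1 = b) : Perm κ :=
  Equiv.ofBijective (fun y => (g (a, y)).2) <| Finite.injective_iff_bijective.1 fun y y' hy =>
    congrArg Prod.snd (g.injective (Prod.ext ((hg y).trans (hg y').symm) hy))

theorem apply_eq_fiberPerm {ι : Type*} [Finite κ] (g : Perm (ι × κ)) (a b : ι)
    (hg : ∀ y, (g (a, y)).1 = b) (y : κ) : g (a, y) = (b, fiberPerm g a b hg y) :=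
  Prod.ext (hg y) rfl

end Model

section Extraction

variable {κ : Type*} {m p : ℕ} {σ : Fin (p + 1) → Perm (Fin (m + 1) × κ)}

theorem IsBlockTransitive.fst_apply_of_mem (hσ : IsBlockTransitive Prod.fst σ)
    {g : Perm (Fin (m + 1) × κ)} (hg : g ∈ closure (Set.range fun i : Fin p => σ i.castSucc))
    (z : Fin (m + 1) × κ) : (g z).1 = z.1 :=
  ((hσ.connects_castSucc_iff z (g z)).1 ⟨g, hg, rfl⟩).symm

theorem IsBlockTransitive.fst_apply_eq_of_mem_centralizer (hσ : IsBlockTransitive Prod.fst σ)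
    {g : Perm (Fin (m + 1) × κ)} (hg : g ∈ centralizer (Set.range fun i : Fin p => σ i.castSucc))
    {z w : Fin (m + 1) × κ} (hzw : z.1 = w.1) : (g z).1 = (g w).1 := by
  obtain ⟨k, hk, rfl⟩ := (hσ.connects_castSucc_iff z w).2 hzw
  rw [← centralizer_closure] at hg
  rw [← Perm.mul_apply, ← mem_centralizer_iff.1 hg k hk, Perm.mul_apply, hσ.fst_apply_of_mem hk]

theorem IsBlockTransitive.last_mem_centralizer (hσ : IsBlockTransitive Prod.fst σ) :
    σ (Fin.last p) ∈ centralizer (Set.range fun i : Fin p => σ i.castSucc) :=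
  mem_centralizer_iff.2 fun _ ⟨_, hi⟩ => hi ▸ (hσ.commute _ _).eq

theorem IsBlockTransitive.exists_rowPerm [Nonempty κ] (hσ : IsBlockTransitive Prod.fst σ) :
    ∃ π : Perm (Fin (m + 1)), ∀ z, (σ (Fin.last p) z).1 = π z.1 := by
  obtain ⟨y₀⟩ := ‹Nonempty κ›
  have hρ := hσ.last_mem_centralizer
  have hinj : Injective fun a => (σ (Fin.last p) (a, y₀)).1 := fun a a' h => by
    simpa using hσ.fst_apply_eq_of_mem_centralizer (inv_mem hρ) h
  exact ⟨Equiv.ofBijective _ hinj.bijective_of_finite, fun z =>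
    hσ.fst_apply_eq_of_mem_centralizer hρ (z := z) (w := (z.1, y₀)) rfl⟩

theorem IsBlockTransitive.exists_zpow_of_mem (hσ : IsBlockTransitive Prod.fst σ)
    {π : Perm (Fin (m + 1))} (hπ : ∀ z, (σ (Fin.last p) z).1 = π z.1)
    {g : Perm (Fin (m + 1) × κ)} (hg : g ∈ closure (Set.range σ)) :
    ∃ k : ℤ, ∀ z, (g z).1 = (π ^ k) z.1 := by
  induction hg using closure_induction with
  | mem g hg =>
    obtain ⟨i, rfl⟩ := hg
    induction i using Fin.lastCases with
    | last => exact ⟨1, by simpa using hπ⟩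
    | cast i => exact ⟨0, hσ.fst_apply_of_mem (subset_closure ⟨i, rfl⟩)⟩
  | one => exact ⟨0, fun z => rfl⟩
  | mul _ _ _ _ ih ih' =>
    obtain ⟨k, hk⟩ := ih
    obtain ⟨k', hk'⟩ := ih'
    exact ⟨k + k', fun z => by rw [Perm.mul_apply, hk, hk', zpow_add, Perm.mul_apply]⟩
  | inv _ _ ih =>
    obtain ⟨k, hk⟩ := ih
    refine ⟨-k, fun z => ?_⟩
    rw [zpow_neg, eq_comm, Perm.inv_eq_iff_eq, ← hk, ← Perm.mul_apply, mul_inv_cancel,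
      Perm.one_apply]

theorem IsBlockTransitive.exists_rowOrder [Nonempty κ] (hσ : IsBlockTransitive Prod.fst σ) :
    ∃ e : Perm (Fin (m + 1)),
      (∀ (j : Fin (m + 1)) y, ((σ (Fin.last p) ^ (j : ℕ)) (0, y)).1 = e j) ∧
        ∀ y, ((σ (Fin.last p) ^ (m + 1)) (0, y)).1 = 0 := by
  obtain ⟨y₀⟩ := ‹Nonempty κ›
  obtain ⟨π, hπ⟩ := hσ.exists_rowPerm
  have hpow : ∀ (k : ℕ) z, ((σ (Fin.last p) ^ k) z).1 = (π ^ k) z.1 := fun k z => by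
    induction k with
    | zero => rfl
    | succ k ih => rw [pow_succ', Perm.mul_apply, hπ, ih, pow_succ', Perm.mul_apply]
  have hcycle : Surjective fun k : ℤ => (π ^ k) 0 := fun a => by
    obtain ⟨g, hg, hga⟩ := hσ.connects (0, y₀) (a, y₀)
    obtain ⟨k, hk⟩ := hσ.exists_zpow_of_mem hπ hg
    exact ⟨k, (hk _).symm.trans (congrArg Prod.fst hga)⟩
  obtain ⟨e, he, hlast⟩ := π.exists_perm_eq_pow_apply_zero hcycle
  exact ⟨e, fun j y => by rw [hpow, ← he], fun y => by rw [hpow, hlast]⟩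

theorem IsBlockTransitive.exists_frame [Finite κ] [Nonempty κ]
    (hσ : IsBlockTransitive Prod.fst σ) :
    ∃ (e : Perm (Fin (m + 1))) (F : Fin m → Perm κ), e 0 = 0 ∧
      (∀ (j : Fin (m + 1)) y, frame e F (j, y) = (σ (Fin.last p) ^ (j : ℕ)) (0, y)) ∧
        ∀ y, ((σ (Fin.last p) ^ (m + 1)) (0, y)).1 = 0 := by
  obtain ⟨y₀⟩ := ‹Nonempty κ›
  obtain ⟨e, he, hlast⟩ := hσ.exists_rowOrder
  have he0 : e 0 = 0 := (he 0 y₀).symm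
  let G : Fin (m + 1) → Perm κ := fun j => fiberPerm _ 0 (e j) (he j)
  refine ⟨e, fun k => G k.succ, he0, fun j y => ?_, hlast⟩
  induction j using Fin.cases with
  | zero => simp [frame_apply, he0]
  | succ k => rw [frame_apply, Fin.cons_succ, apply_eq_fiberPerm _ 0 (e k.succ) (he k.succ)]

theorem IsBlockTransitive.exists_permCongr_stdTuple_eq [Finite κ]
    (hσ : IsBlockTransitive Prod.fst σ) {Θ : Perm (Fin (m + 1) × κ)}
    (hΘ : ∀ (j : Fin (m + 1)) y, Θ (j, y) = (σ (Fin.last p) ^ (j : ℕ)) (0, y))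
    (hlast : ∀ y, ((σ (Fin.last p) ^ (m + 1)) (0, y)).1 = 0) :
    ∃ (τ : Fin p → Perm κ) (h : Perm κ), ∀ i, Θ.permCongr (stdTuple τ h i) = σ i := by
  have hrow : ∀ i : Fin p, ∀ y, (σ i.castSucc (0, y)).1 = 0 := fun i y =>
    hσ.fst_apply_of_mem (subset_closure ⟨i, rfl⟩) _
  refine ⟨fun i => fiberPerm _ 0 0 (hrow i), fiberPerm _ 0 0 hlast, fun i => ?_⟩
  suffices h : ∀ z, Θ (stdTuple _ _ i z) = σ i (Θ z) by
    refine Equiv.ext fun x => ?_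
    rw [permCongr_apply, h, apply_symm_apply]
  rintro ⟨j, y⟩
  induction i using Fin.lastCases with
  | last =>
    by_cases hj : j = Fin.last m
    · subst hj
      rw [stdTuple_last, shift_apply_last, hΘ, hΘ, Fin.val_last, ← Perm.mul_apply, ← pow_succ',
        apply_eq_fiberPerm _ _ _ hlast]
      rfl
    · rw [stdTuple_last, shift_apply_of_ne _ hj, hΘ, hΘ,
        Fin.val_add_one_of_lt (Fin.lt_last_iff_ne_last.2 hj), pow_succ', Perm.mul_apply]
  | cast i =>
    rw [stdTuple_castSucc, rowHom_apply, hΘ, hΘ, ← apply_eq_fiberPerm _ _ _ (hrow i),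
      ← Perm.mul_apply, ((hσ.commute _ _).pow_left _).eq, Perm.mul_apply]

end Extraction

section Counting

variable {κ : Type*} {m p : ℕ}

def TransitiveCommTuple (p : ℕ) (κ : Type*) : Type _ :=
  {τ : Fin p → Perm κ // (∀ i j, Commute (τ i) (τ j)) ∧ ∀ x y, Connects (Set.range τ) x y}

def BlockData (m p : ℕ) (κ : Type*) : Type _ :=
  ({e : Perm (Fin (m + 1)) // e 0 = 0} × (Fin m → Perm κ)) ×
    Σ τ : TransitiveCommTuple p κ, centralizer (Set.range τ.1)

def BlockData.tuple (d : BlockData m p κ) : Fin (p + 1) → Perm (Fin (m + 1) × κ) :=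
  fun i => (frame d.1.1.1 d.1.2).permCongr (stdTuple d.2.1.1 d.2.2 i)

theorem BlockData.isBlockTransitive_tuple (d : BlockData m p κ) :
    IsBlockTransitive Prod.fst d.tuple :=
  (isBlockTransitive_permCongr_iff _ (fst_frame_apply_eq_iff _ _) _).2
    ((isBlockTransitive_stdTuple_iff _ _).2 ⟨d.2.1.2, d.2.2.2⟩)

theorem BlockData.tuple_injective [Nonempty κ] :
    Injective (BlockData.tuple (m := m) (p := p) (κ := κ)) := by
  rintro ⟨⟨⟨e, he⟩, F⟩, ⟨τ, hτ⟩, h, hh⟩ ⟨⟨⟨e', he'⟩, F'⟩, ⟨τ', hτ'⟩, h', hh'⟩ heq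
  have hshift : (frame e F).permCongr (shift h) = (frame e' F').permCongr (shift h') := by
    simpa [BlockData.tuple] using congrFun heq (Fin.last p)
  have hframe : frame e F = frame e' F' := Equiv.ext fun ⟨j, y⟩ => by
    rw [frame_apply_eq_pow he F h, frame_apply_eq_pow he' F' h', hshift]
  obtain ⟨rfl, rfl⟩ := frame_injective hframe
  have hstd : ∀ i, stdTuple (m := m) τ h i = stdTuple τ' h' i := fun i =>
    (frame e F).permCongr.injective (congrFun heq i)
  obtain rfl : τ = τ' := funext fun i => Equiv.ext fun y => by
    simpa using congrArg (fun g : Perm (Fin (m + 1) × κ) => (g (0, y)).2) (hstd i.castSucc)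
  obtain rfl : h = h' := Equiv.ext fun y => by
    simpa using
      congrArg (fun g : Perm (Fin (m + 1) × κ) => (g (Fin.last m, y)).2) (hstd (Fin.last p))
  rfl

theorem BlockData.exists_tuple_eq [Finite κ] [Nonempty κ]
    {σ : Fin (p + 1) → Perm (Fin (m + 1) × κ)} (hσ : IsBlockTransitive Prod.fst σ) :
    ∃ d : BlockData m p κ, d.tuple = σ := by
  obtain ⟨e, F, he, hframe, hlast⟩ := hσ.exists_frame
  obtain ⟨τ, h, hτh⟩ := hσ.exists_permCongr_stdTuple_eq hframe hlast
  have hstd : IsBlockTransitive Prod.fst (stdTuple (m := m) τ h) :=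
    (isBlockTransitive_permCongr_iff (frame e F) (fst_frame_apply_eq_iff e F) _).1
      (funext hτh ▸ hσ)
  obtain ⟨hτ, hh⟩ := (isBlockTransitive_stdTuple_iff τ h).1 hstd
  exact ⟨((⟨e, he⟩, F), ⟨⟨τ, hτ⟩, ⟨h, hh⟩⟩), funext hτh⟩

theorem card_blockData [Finite κ] [Nonempty κ] :
    Nat.card (BlockData m p κ) = m.factorial * (Nat.card κ).factorial ^ m *
      (Nat.card (TransitiveCommTuple p κ) * Nat.card κ) := by
  obtain ⟨y₀⟩ := ‹Nonempty κ›
  have hsigma : (Σ τ : TransitiveCommTuple p κ, centralizer (Set.range τ.1)) ≃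
      TransitiveCommTuple p κ × κ :=
    sigmaEquivProdOfEquiv fun τ => centralizerEquivOfTransitive τ.1 τ.2.1 τ.2.2 y₀
  rw [BlockData, Nat.card_prod, Nat.card_prod, Nat.card_congr hsigma, Nat.card_prod,
    Perm.card_fixing_zero, Nat.card_fun, Nat.card_perm, Nat.card_fin]

theorem card_isBlockTransitive_fst [Finite κ] [Nonempty κ] :
    Nat.card {σ : Fin (p + 1) → Perm (Fin (m + 1) × κ) // IsBlockTransitive Prod.fst σ} =
      m.factorial * (Nat.card κ).factorial ^ m *
        (Nat.card (TransitiveCommTuple p κ) * Nat.card κ) := by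
  have hbij : Bijective fun d : BlockData m p κ => (⟨d.tuple, d.isBlockTransitive_tuple⟩ :
      {σ // IsBlockTransitive Prod.fst σ}) := by
    refine ⟨fun d d' h => BlockData.tuple_injective (congrArg Subtype.val h), ?_⟩
    rintro ⟨σ, hσ⟩
    obtain ⟨d, rfl⟩ := BlockData.exists_tuple_eq hσ
    exact ⟨d, rfl⟩
  rw [← card_blockData, Nat.card_congr (Equiv.ofBijective _ hbij)]

theorem card_transitiveCommTuple (p t : ℕ) :
    Nat.card (TransitiveCommTuple p (Fin (t + 1))) = A p (t + 1) 1 :=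
  Nat.card_congr <| Equiv.subtypeEquivRight fun _ =>
    and_congr_right fun _ => (card_orbitRel_quotient_closure_eq_one_iff _).symm

end Counting

end BlockTransitive

open BlockTransitive in
theorem stmt12_general (p n r s : ℕ) (hn : 1 ≤ n) (hrs : n = r * s)
    (X : Finpartition (Finset.univ : Finset (Fin n)))
    (hr : X.parts.card = r) (hs : ∀ b ∈ X.parts, b.card = s) :
    Nat.card {σ : Fin (p + 1) → Equiv.Perm (Fin n) //
        (∀ i j, Commute (σ i) (σ j)) ∧
        (∀ x y : Fin n, ∃ g ∈ Subgroup.closure (Set.range σ), g x = y) ∧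
        (∀ b : Finset (Fin n), b ∈ X.parts ↔
          ∃ x : Fin n, (b : Set (Fin n)) =
            MulAction.orbit (Subgroup.closure
              (Set.range fun i : Fin p => σ i.castSucc)) x)} =
      A p s 1 * (r - 1).factorial * s.factorial ^ (r - 1) * s := by
  obtain ⟨m, rfl⟩ : ∃ m, r = m + 1 := Nat.exists_eq_succ_of_ne_zero (by rintro rfl; omega)
  obtain ⟨t, rfl⟩ : ∃ t, s = t + 1 := Nat.exists_eq_succ_of_ne_zero (by rintro rfl; omega)
  obtain ⟨E, hE⟩ := X.exists_equiv_prod hr hs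
  rw [Nat.card_congr ((Equiv.subtypeEquivRight (isBlockTransitive_part_iff X)).trans
      (isBlockTransitiveEquiv E hE)),
    card_isBlockTransitive_fst, card_transitiveCommTuple, Nat.card_fin, Nat.add_sub_cancel]
  ring

theorem stmt12 (p n r s : ℕ) (hp : 1 ≤ p) (hn : 1 ≤ n) (hrs : n = r * s)
    (X : Finpartition (Finset.univ : Finset (Fin n)))
    (hr : X.parts.card = r) (hs : ∀ b ∈ X.parts, b.card = s) :
    Nat.card {σ : Fin (p + 1) → Equiv.Perm (Fin n) //
        (∀ i j, Commute (σ i) (σ j)) ∧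
        (∀ x y : Fin n, ∃ g ∈ Subgroup.closure (Set.range σ), g x = y) ∧
        (∀ b : Finset (Fin n), b ∈ X.parts ↔
          ∃ x : Fin n, (b : Set (Fin n)) =
            MulAction.orbit (Subgroup.closure
              (Set.range fun i : Fin p => σ i.castSucc)) x)} =
      A p s 1 * (r - 1).factorial * s.factorial ^ (r - 1) * s :=
  stmt12_general p n r s hn hrs X hr hs
end

section
/- For all integers p ≥ 1 and n ≥ 3, A(p,n,n−1)^2 ≥ A(p,n,n) · A(p,n,n−2). -/
/-!
Only the trivial tuple has `n` orbits, so `A p n n ≤ 1` and it suffices to bound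
`A p n (n - 2)` by `A p n (n - 1) ^ 2`. The orbit partition of a tuple with `n - 2` orbits has
either two blocks of size 2 or one block `{a, b, c}` of size 3, all other blocks being points.
In the first case the tuple is the entrywise product of two tuples with values in `{1, (a b)}`
and `{1, (c d)}`, each of which has `n - 1` orbits. In the second case commutativity forces an
entry fixing one point of `{a, b, c}` to fix all of it, so every entry is `1` or one of the two
3-cycles `(a b)(a c)`, `(a c)(a b)`; such a tuple is again encoded by a pair of tuples with values
in `{1, (a b)}` and `{1, (a c)}`. Hence one map `merge` from pairs of tuples with `n - 1` orbits
hits every tuple with `n - 2` orbits.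
-/

open Equiv Finset MulAction Subgroup

variable {α ι : Type*}

section Fibres

variable {β : Type*} [Fintype α] {f : α → β}

theorem Fintype.exists_eq_two_or_exists_eq_one_eq_one_of_sum_eq_two [Fintype ι] [DecidableEq ι]
    {g : ι → ℕ} (h : ∑ i, g i = 2) :
    (∃ i, g i = 2 ∧ ∀ j ≠ i, g j = 0) ∨
      ∃ i j, i ≠ j ∧ g i = 1 ∧ g j = 1 ∧ ∀ k, k ≠ i → k ≠ j → g k = 0 := by
  obtain ⟨i, -, hi⟩ := exists_ne_zero_of_sum_ne_zero (s := univ) (f := g) (by omega)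
  rw [← add_sum_erase _ _ (mem_univ i)] at h
  by_cases h2 : g i = 2
  · exact .inl ⟨i, h2, fun j hj => sum_eq_zero_iff.mp (by omega) j (mem_erase.mpr ⟨hj, mem_univ j⟩)⟩
  · obtain ⟨j, hj, hgj⟩ := exists_ne_zero_of_sum_ne_zero (s := univ.erase i) (f := g) (by omega)
    rw [← add_sum_erase _ _ hj] at h
    refine .inr ⟨i, j, (ne_of_mem_erase hj).symm, by omega, by omega, fun k hki hkj => ?_⟩
    exact sum_eq_zero_iff.mp (by omega) k (mem_erase.mpr ⟨hkj, mem_erase.mpr ⟨hki, mem_univ k⟩⟩)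

theorem Function.Surjective.card_add_one_of_injOn [Fintype β] (hf : f.Surjective) {x y : α}
    (hxy : x ≠ y) (hfxy : f x = f y) (hinj : Set.InjOn f {y}ᶜ) :
    Fintype.card β + 1 = Fintype.card α := by
  classical
  have himage : (univ.erase y).image f = univ := by
    refine eq_univ_of_forall fun q => ?_
    obtain ⟨z, rfl⟩ := hf q
    by_cases hz : z = y
    · exact mem_image.mpr ⟨x, mem_erase.mpr ⟨hxy, mem_univ x⟩, hz ▸ hfxy⟩
    · exact mem_image_of_mem f (mem_erase.mpr ⟨hz, mem_univ z⟩)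
  rw [← card_univ, ← himage,
    card_image_of_injOn (by rwa [coe_erase, coe_univ, ← Set.compl_eq_univ_sdiff]),
    card_erase_of_mem (mem_univ y), card_univ]
  have := Fintype.card_pos_iff.mpr ⟨x⟩
  omega

theorem Function.Surjective.one_le_card_fiber [DecidableEq β] (hf : f.Surjective) (q : β) :
    1 ≤ #{x | f x = q} := by
  obtain ⟨x, rfl⟩ := hf q
  exact card_pos.mpr ⟨x, by simp⟩

theorem Function.Surjective.card_add_sum_card_fiber_sub_one [Fintype β] [DecidableEq β]
    (hf : f.Surjective) : Fintype.card β + ∑ q, (#{x | f x = q} - 1) = Fintype.card α := by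
  rw [← card_univ (α := α), card_eq_sum_card_fiberwise (f := f) (t := univ) fun _ _ => mem_univ _,
    ← card_univ, card_eq_sum_ones, ← sum_add_distrib]
  exact sum_congr rfl fun q _ => by have := hf.one_le_card_fiber q; omega

theorem eq_iff_of_card_fiber_le_one [DecidableEq β] (D : Finset β)
    (hD : ∀ q ∉ D, #{x | f x = q} ≤ 1) (x y : α) :
    f x = f y ↔ x = y ∨ ∃ q ∈ D, f x = q ∧ f y = q := by
  constructor
  · intro hxy
    by_cases hq : f x ∈ D
    · exact .inr ⟨f x, hq, rfl, hxy.symm⟩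
    · exact .inl (card_le_one.mp (hD _ hq) x (by simp) y (by simp [hxy]))
  · rintro (rfl | ⟨q, -, hx, hy⟩)
    · rfl
    · rw [hx, hy]

theorem Function.Surjective.eq_iff_of_card_add_two [Fintype β] (hf : f.Surjective)
    (h : Fintype.card β + 2 = Fintype.card α) :
    (∃ s : Finset α, #s = 3 ∧ ∀ x y, f x = f y ↔ x = y ∨ x ∈ s ∧ y ∈ s) ∨
      ∃ s t : Finset α, #s = 2 ∧ #t = 2 ∧ Disjoint s t ∧
        ∀ x y, f x = f y ↔ x = y ∨ x ∈ s ∧ y ∈ s ∨ x ∈ t ∧ y ∈ t := by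
  classical
  have hsum := hf.card_add_sum_card_fiber_sub_one
  have hpos := hf.one_le_card_fiber
  rcases Fintype.exists_eq_two_or_exists_eq_one_eq_one_of_sum_eq_two
      (by omega : ∑ q, (#{x | f x = q} - 1) = 2) with
    ⟨q, hq, hrest⟩ | ⟨q, q', hqq', hq, hq', hrest⟩
  · refine .inl ⟨({x | f x = q} : Finset α), by omega, fun x y => ?_⟩
    rw [eq_iff_of_card_fiber_le_one {q} fun r hr => by
      have := hrest r (by simpa using hr); omega]
    simp only [mem_singleton, exists_eq_left, mem_filter, mem_univ, true_and]
  · refine .inr ⟨({x | f x = q} : Finset α), ({x | f x = q'} : Finset α),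
      by have := hpos q; omega, by have := hpos q'; omega,
      disjoint_filter.mpr fun x _ hx hx' => hqq' (hx.symm.trans hx'), fun x y => ?_⟩
    rw [eq_iff_of_card_fiber_le_one {q, q'} fun r hr => by
      have := hrest r (by simp at hr; exact hr.1) (by simp at hr; exact hr.2); omega]
    simp only [mem_insert, mem_singleton, exists_eq_or_imp, exists_eq_left, mem_filter, mem_univ,
      true_and]

end Fibres

section Permutations

variable [DecidableEq α] {g : Perm α}

theorem Equiv.Perm.eq_swap_mul_swap_of_preserves_triple {a b c : α} (hbc : b ≠ c)
    (hg : ∀ w, g w = w ∨ w ∈ ({a, b, c} : Finset α) ∧ g w ∈ ({a, b, c} : Finset α))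
    (hb : g b ≠ b) (hc : g c ≠ c) (ha : g a = b) : g = swap a c * swap a b := by
  simp only [mem_insert, mem_singleton] at hg
  have := hg b
  have := hg c
  have := g.injective
  ext w
  have := hg w
  simp only [Perm.coe_mul, Function.comp_apply, swap_apply_def]
  grind

theorem Equiv.Perm.eq_ite_mul_ite_of_preserves_pairs {a b c d : α}
    (hst : _root_.Disjoint ({a, b} : Finset α) {c, d})
    (hg : ∀ w, g w = w ∨ w ∈ ({a, b} : Finset α) ∧ g w ∈ ({a, b} : Finset α) ∨
      w ∈ ({c, d} : Finset α) ∧ g w ∈ ({c, d} : Finset α)) :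
    g = (if g a = a then 1 else swap a b) * (if g c = c then 1 else swap c d) := by
  simp only [disjoint_insert_left, disjoint_insert_right, disjoint_singleton, mem_insert,
    mem_singleton, not_or] at hst
  simp only [mem_insert, mem_singleton] at hg
  have := hg a
  have := hg b
  have := hg c
  have := hg d
  have := g.injective
  ext w
  have := hg w
  split_ifs <;> simp only [Perm.coe_mul, Function.comp_apply, swap_apply_def, Perm.coe_one, id] <;>
    grind

end Permutations

def commutingTuples (ι α : Type*) (k : ℕ) : Set (ι → Perm α) :=
  {σ | (∀ i j, Commute (σ i) (σ j)) ∧ Nat.card (orbitRel.Quotient (closure (Set.range σ)) α) = k}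

abbrev orbitMk (σ : ι → Perm α) : α → orbitRel.Quotient (closure (Set.range σ)) α :=
  Quotient.mk''

section Orbits

variable {σ : ι → Perm α}

theorem orbitMk_apply (σ : ι → Perm α) (i : ι) (x : α) : orbitMk σ (σ i x) = orbitMk σ x :=
  Quotient.sound' ⟨⟨σ i, subset_closure ⟨i, rfl⟩⟩, rfl⟩

theorem commute_of_mem_closure_range (hσ : ∀ i j, Commute (σ i) (σ j)) (i : ι) {g : Perm α}
    (hg : g ∈ closure (Set.range σ)) : Commute (σ i) g := by
  have hle : closure (Set.range σ) ≤ centralizer {σ i} :=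
    (closure_le _).mpr (Set.range_subset_iff.mpr fun j => mem_centralizer_singleton_iff.mpr
      (hσ j i).eq)
  exact (mem_centralizer_singleton_iff.mp (hle hg)).symm

theorem apply_eq_self_of_orbitMk_eq (hσ : ∀ i j, Commute (σ i) (σ j)) {i : ι} {x y : α}
    (hxy : orbitMk σ x = orbitMk σ y) (hx : σ i x = x) : σ i y = y := by
  obtain ⟨⟨g, hg⟩, rfl⟩ := Quotient.exact' hxy.symm
  change σ i (g x) = g x
  rw [← Perm.mul_apply, (commute_of_mem_closure_range hσ i hg).eq, Perm.mul_apply, hx]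

theorem exists_apply_ne_of_orbitMk_eq {x y : α} (hxy : orbitMk σ x = orbitMk σ y) (hne : x ≠ y) :
    ∃ i, σ i x ≠ x := by
  by_contra! hfix
  have hle : closure (Set.range σ) ≤ stabilizer (Perm α) x :=
    (closure_le _).mpr (Set.range_subset_iff.mpr hfix)
  obtain ⟨⟨g, hg⟩, rfl⟩ := Quotient.exact' hxy.symm
  exact hne (hle hg).symm

theorem eq_one_of_mem_commutingTuples_card [Finite α]
    (hσ : σ ∈ commutingTuples ι α (Nat.card α)) : σ = 1 := by
  have hbij : Function.Bijective (orbitMk σ) :=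
    (Nat.bijective_iff_surjective_and_card _).mpr ⟨Quotient.mk''_surjective, hσ.2.symm⟩
  funext i
  ext x
  exact hbij.injective (orbitMk_apply σ i x)

theorem mem_closure_range_of_forall_eq_one_or_eq_swap [DecidableEq α] {x y : α}
    (hσ : ∀ i, σ i = 1 ∨ σ i = swap x y) {g : Perm α} (hg : g ∈ closure (Set.range σ)) :
    g = 1 ∨ g = swap x y := by
  induction hg using closure_induction with
  | mem _ h => obtain ⟨i, rfl⟩ := h; exact hσ i
  | one => exact .inl rfl
  | mul _ _ _ _ h₁ h₂ => rcases h₁ with rfl | rfl <;> rcases h₂ with rfl | rfl <;> simp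
  | inv _ _ h => rcases h with rfl | rfl <;> simp

theorem mem_commutingTuples_of_forall_eq_one_or_eq_swap [Fintype α] [DecidableEq α] {x y : α}
    (hxy : x ≠ y) (hσ : ∀ i, σ i = 1 ∨ σ i = swap x y) (hne : ∃ i, σ i ≠ 1) :
    σ ∈ commutingTuples ι α (Fintype.card α - 1) := by
  refine ⟨fun i j => ?_, ?_⟩
  · rcases hσ i with h | h <;> rcases hσ j with h' | h' <;> simp [h, h']
  obtain ⟨i, hi⟩ := hne
  have hmk : orbitMk σ x = orbitMk σ y := by
    rw [← orbitMk_apply σ i x, (hσ i).resolve_left hi, swap_apply_left]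
  have hinj : Set.InjOn (orbitMk σ) {y}ᶜ := by
    intro u hu v hv huv
    obtain ⟨⟨g, hg⟩, rfl⟩ := Quotient.exact' huv.symm
    rcases mem_closure_range_of_forall_eq_one_or_eq_swap hσ hg with rfl | rfl
    · rfl
    · change swap x y u ∈ ({y}ᶜ : Set α) at hv
      rw [Set.mem_compl_singleton_iff] at hu hv
      have hux : u ≠ x := fun h => hv (by rw [h, swap_apply_left])
      exact (swap_apply_of_ne_of_ne hux hu).symm
  classical
  have := Quotient.mk''_surjective.card_add_one_of_injOn hxy hmk hinj
  rw [Fintype.card_eq_nat_card (α := orbitRel.Quotient _ _)] at this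
  omega

theorem eq_one_or_eq_swap_mul_swap_of_orbitMk_eq_iff [DecidableEq α]
    (hσ : ∀ i j, Commute (σ i) (σ j)) {a b c : α} (hbc : b ≠ c)
    (hker : ∀ x y, orbitMk σ x = orbitMk σ y ↔
      x = y ∨ x ∈ ({a, b, c} : Finset α) ∧ y ∈ ({a, b, c} : Finset α))
    (i : ι) : σ i = 1 ∨ σ i = swap a b * swap a c ∨ σ i = swap a c * swap a b := by
  have hg (w : α) : σ i w = w ∨ w ∈ ({a, b, c} : Finset α) ∧ σ i w ∈ ({a, b, c} : Finset α) := by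
    have := (hker (σ i w) w).mp (orbitMk_apply σ i w)
    tauto
  have hrigid (x y : α) (hx : x ∈ ({a, b, c} : Finset α)) (hy : y ∈ ({a, b, c} : Finset α))
      (hfix : σ i x = x) : σ i y = y :=
    apply_eq_self_of_orbitMk_eq hσ ((hker x y).mpr (.inr ⟨hx, hy⟩)) hfix
  by_cases ha : σ i a = a
  · refine .inl (Perm.ext fun w => ?_)
    rcases hg w with h | ⟨hw, -⟩
    · exact h
    · exact hrigid a w (by simp) hw ha
  have hb : σ i b ≠ b := fun h => ha (hrigid b a (by simp) (by simp) h)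
  have hc : σ i c ≠ c := fun h => ha (hrigid c a (by simp) (by simp) h)
  have hbc' : σ i a = b ∨ σ i a = c := by
    have := hg a
    simp only [mem_insert, mem_singleton] at this
    tauto
  rcases hbc' with h | h
  · exact .inr (.inr (Perm.eq_swap_mul_swap_of_preserves_triple hbc hg hb hc h))
  · refine .inr (.inl (Perm.eq_swap_mul_swap_of_preserves_triple hbc.symm ?_ hc hb h))
    rwa [Finset.pair_comm c b]

end Orbits

section Merge

variable {τ τ' : ι → Perm α}

open Classical in
noncomputable def nontrivialEntry (τ : ι → Perm α) : Perm α :=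
  if h : ∃ i, τ i ≠ 1 then τ h.choose else 1

theorem nontrivialEntry_eq {g : Perm α} (hτ : ∀ i, τ i = 1 ∨ τ i = g) (hne : ∃ i, τ i ≠ 1) :
    nontrivialEntry τ = g := by
  rw [nontrivialEntry, dif_pos hne]
  exact (hτ _).resolve_left hne.choose_spec

open Classical in
/-- For transposition tuples with values in `{1, A}` and `{1, B}`: if `A` and `B` commute the
entries are multiplied; otherwise `A B` and `B A` are 3-cycles, and the entry is `A B` where the
first tuple is nontrivial, `B A` where only the second one is. -/
noncomputable def merge (τ τ' : ι → Perm α) : ι → Perm α :=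
  if Commute (nontrivialEntry τ) (nontrivialEntry τ') then τ * τ'
  else fun i => if τ i ≠ 1 then nontrivialEntry τ * nontrivialEntry τ'
    else if τ' i ≠ 1 then nontrivialEntry τ' * nontrivialEntry τ else 1

variable [Fintype α] [DecidableEq α] {σ : ι → Perm α}

theorem mem_image_merge_of_disjoint {a b c d : α} (hab : a ≠ b) (hcd : c ≠ d)
    (hst : Disjoint ({a, b} : Finset α) {c, d})
    (hσ : ∀ i, σ i = (if σ i a = a then 1 else swap a b) * (if σ i c = c then 1 else swap c d))
    (hne : ∃ i, σ i a ≠ a) (hne' : ∃ i, σ i c ≠ c) :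
    σ ∈ Function.uncurry merge '' (commutingTuples ι α (Fintype.card α - 1) ×ˢ
      commutingTuples ι α (Fintype.card α - 1)) := by
  set τ : ι → Perm α := fun i => if σ i a = a then 1 else swap a b
  set τ' : ι → Perm α := fun i => if σ i c = c then 1 else swap c d
  have hτ (i : ι) : τ i = 1 ∨ τ i = swap a b := by simp only [τ]; split_ifs <;> simp
  have hτ' (i : ι) : τ' i = 1 ∨ τ' i = swap c d := by simp only [τ']; split_ifs <;> simp
  have hτne : ∃ i, τ i ≠ 1 := hne.imp fun i hi => by simpa [τ, hi] using hab
  have hτ'ne : ∃ i, τ' i ≠ 1 := hne'.imp fun i hi => by simpa [τ', hi] using hcd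
  have hcomm : Commute (swap a b) (swap c d) :=
    (Perm.disjoint_iff_disjoint_support.mpr
      (by rwa [Perm.support_swap hab, Perm.support_swap hcd])).commute
  refine ⟨(τ, τ'), ⟨mem_commutingTuples_of_forall_eq_one_or_eq_swap hab hτ hτne,
    mem_commutingTuples_of_forall_eq_one_or_eq_swap hcd hτ' hτ'ne⟩, ?_⟩
  rw [Function.uncurry_apply_pair, merge, nontrivialEntry_eq hτ hτne, nontrivialEntry_eq hτ' hτ'ne,
    if_pos hcomm]
  exact funext fun i => (hσ i).symm

theorem mem_image_merge_of_three_cycles {a b c : α} (hab : a ≠ b) (hac : a ≠ c) (hbc : b ≠ c)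
    (hσ : ∀ i, σ i = 1 ∨ σ i = swap a b * swap a c ∨ σ i = swap a c * swap a b)
    (hne : ∃ i, σ i = swap a b * swap a c) :
    σ ∈ Function.uncurry merge '' (commutingTuples ι α (Fintype.card α - 1) ×ˢ
      commutingTuples ι α (Fintype.card α - 1)) := by
  have hABa : (swap a b * swap a c) a = c := by simp [swap_apply_of_ne_of_ne hac.symm hbc.symm]
  have hBAa : (swap a c * swap a b) a = b := by simp [swap_apply_of_ne_of_ne hab.symm hbc]
  have hAB1 : swap a b * swap a c ≠ 1 := fun h => hac (by simpa [h] using hABa)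
  have hBA1 : swap a c * swap a b ≠ 1 := fun h => hab (by simpa [h] using hBAa)
  have hAB : ¬Commute (swap a b) (swap a c) := fun h => hbc (by rw [← hBAa, ← h.eq, hABa])
  have hBA : swap a c * swap a b ≠ swap a b * swap a c := fun h => hAB h.symm
  set τ : ι → Perm α := fun i => if σ i = swap a b * swap a c then swap a b else 1
  set τ' : ι → Perm α := fun i => if σ i = 1 then 1 else swap a c
  have hτ (i : ι) : τ i = 1 ∨ τ i = swap a b := by simp only [τ]; split_ifs <;> simp
  have hτ' (i : ι) : τ' i = 1 ∨ τ' i = swap a c := by simp only [τ']; split_ifs <;> simp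
  have hτne : ∃ i, τ i ≠ 1 := hne.imp fun i hi => by simpa [τ, hi] using hab
  have hτ'ne : ∃ i, τ' i ≠ 1 := hne.imp fun i hi => by simpa [τ', hi, hAB1] using hac
  refine ⟨(τ, τ'), ⟨mem_commutingTuples_of_forall_eq_one_or_eq_swap hab hτ hτne,
    mem_commutingTuples_of_forall_eq_one_or_eq_swap hac hτ' hτ'ne⟩, funext fun i => ?_⟩
  rw [Function.uncurry_apply_pair, merge, nontrivialEntry_eq hτ hτne, nontrivialEntry_eq hτ' hτ'ne,
    if_neg hAB]
  rcases hσ i with h | h | h <;> simp [τ, τ', h, hAB1.symm, hBA1, hBA, hab, hac]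

theorem mem_image_merge_of_mem_commutingTuples_card_sub_two
    (hσ : σ ∈ commutingTuples ι α (Fintype.card α - 2)) (h2 : 2 ≤ Fintype.card α) :
    σ ∈ Function.uncurry merge '' (commutingTuples ι α (Fintype.card α - 1) ×ˢ
      commutingTuples ι α (Fintype.card α - 1)) := by
  classical
  obtain ⟨hcomm, hcard⟩ := hσ
  have hcard' : Fintype.card (orbitRel.Quotient (closure (Set.range σ)) α) + 2 =
      Fintype.card α := by
    rw [Fintype.card_eq_nat_card, hcard]
    omega
  rcases (Quotient.mk''_surjective : (orbitMk σ).Surjective).eq_iff_of_card_add_two hcard' with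
    ⟨s, hs, hker⟩ | ⟨s, t, hs, ht, hst, hker⟩
  · obtain ⟨a, b, c, hab, hac, hbc, rfl⟩ := card_eq_three.mp hs
    have hform := eq_one_or_eq_swap_mul_swap_of_orbitMk_eq_iff hcomm hbc hker
    obtain ⟨i, hi⟩ := exists_apply_ne_of_orbitMk_eq ((hker a b).mpr (.inr ⟨by simp, by simp⟩)) hab
    rcases hform i with h | h | h
    · simp [h] at hi
    · exact mem_image_merge_of_three_cycles hab hac hbc hform ⟨i, h⟩
    · exact mem_image_merge_of_three_cycles hac hab hbc.symm (fun j => by have := hform j; tauto)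
        ⟨i, h⟩
  · obtain ⟨a, b, hab, rfl⟩ := card_eq_two.mp hs
    obtain ⟨c, d, hcd, rfl⟩ := card_eq_two.mp ht
    refine mem_image_merge_of_disjoint hab hcd hst
      (fun i => Perm.eq_ite_mul_ite_of_preserves_pairs hst fun w => ?_)
      (exists_apply_ne_of_orbitMk_eq ((hker a b).mpr (by simp)) hab)
      (exists_apply_ne_of_orbitMk_eq ((hker c d).mpr (by simp)) hcd)
    have := (hker (σ i w) w).mp (orbitMk_apply σ i w)
    tauto

end Merge

theorem ncard_commutingTuples_card_le_one [Finite ι] [Finite α] :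
    (commutingTuples ι α (Nat.card α)).ncard ≤ 1 :=
  (Set.ncard_le_one_iff (Set.toFinite _)).mpr fun hσ hτ =>
    (eq_one_of_mem_commutingTuples_card hσ).trans (eq_one_of_mem_commutingTuples_card hτ).symm

theorem ncard_commutingTuples_card_sub_two_le [Finite ι] [Fintype α] [DecidableEq α]
    (h2 : 2 ≤ Fintype.card α) :
    (commutingTuples ι α (Fintype.card α - 2)).ncard ≤
      (commutingTuples ι α (Fintype.card α - 1)).ncard ^ 2 :=
  calc _ ≤ (Function.uncurry merge '' (commutingTuples ι α (Fintype.card α - 1) ×ˢ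
        commutingTuples ι α (Fintype.card α - 1))).ncard :=
        Set.ncard_le_ncard (fun _ hσ => mem_image_merge_of_mem_commutingTuples_card_sub_two hσ h2)
          (Set.toFinite _)
    _ ≤ _ := Set.ncard_image_le (Set.toFinite _)
    _ = _ := by rw [Set.ncard_prod, sq]

theorem stmt15_general (p n : ℕ) (hn : 3 ≤ n) :
    A p n n * A p n (n - 2) ≤ A p n (n - 1) ^ 2 := by
  have hA (k : ℕ) : A p n k = (commutingTuples (Fin p) (Fin n) k).ncard := Nat.card_coe_set_eq _
  have h₁ : A p n n ≤ 1 := by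
    simpa [hA] using ncard_commutingTuples_card_le_one (ι := Fin p) (α := Fin n)
  have h₂ : A p n (n - 2) ≤ A p n (n - 1) ^ 2 := by
    simpa [hA] using
      ncard_commutingTuples_card_sub_two_le (ι := Fin p) (α := Fin n) (by simp; omega)
  calc A p n n * A p n (n - 2) ≤ 1 * A p n (n - 1) ^ 2 := Nat.mul_le_mul h₁ h₂
    _ = A p n (n - 1) ^ 2 := one_mul _

theorem stmt15 (p n : ℕ) (hp : 1 ≤ p) (hn : 3 ≤ n) :
    A p n n * A p n (n - 2) ≤ A p n (n - 1) ^ 2 :=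
  stmt15_general p n hn
end

section
/- For all integers p ≥ 1 and n ≥ 1, A(p,n,n−1) = binom(n,2) · (2^p − 1). -/
open Finset in
theorem Fintype.sum_eq_card_add_one_iff {ι : Type*} [Fintype ι] {f : ι → ℕ}
    (hf : ∀ i, 1 ≤ f i) :
    ∑ i, f i = Fintype.card ι + 1 ↔ ∃ i, f i = 2 ∧ ∀ j ≠ i, f j = 1 := by
  classical
  have hsum : ∑ i, f i = ∑ i, (f i - 1) + Fintype.card ι := by
    rw [Fintype.card_eq_sum_ones, ← sum_add_distrib]
    exact Finset.sum_congr rfl fun i _ => (Nat.sub_add_cancel (hf i)).symm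
  rw [hsum, Nat.add_comm _ 1, Nat.add_right_cancel_iff]
  constructor
  · intro h
    obtain ⟨i, -, hi⟩ := exists_ne_zero_of_sum_ne_zero (h ▸ one_ne_zero)
    rw [← add_sum_erase _ _ (mem_univ i)] at h
    have hrest := sum_eq_zero_iff.mp (by omega : ∑ j ∈ univ.erase i, (f j - 1) = 0)
    refine ⟨i, by omega, fun j hj => ?_⟩
    have := hrest j (mem_erase.mpr ⟨hj, mem_univ j⟩)
    have := hf j
    omega
  · rintro ⟨i, hi, hj⟩
    rw [Fintype.sum_eq_single i fun j hji => by simp [hj j hji], hi]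

namespace MulAction

theorem ncard_orbit_eq_one_iff {M α : Type*} [Monoid M] [MulAction M α] [Finite α] {a : α} :
    (orbit M a).ncard = 1 ↔ a ∈ fixedPoints M α := by
  rw [← subsingleton_orbit_iff_mem_fixedPoints, ← Set.ncard_le_one_iff_subsingleton]
  have := (nonempty_orbit (M := M) a).ncard_pos
  omega

theorem card_orbitRel_quotient_add_one_eq_iff {M α : Type*} [Group M] [MulAction M α]
    [Finite α] :
    Nat.card (orbitRel.Quotient M α) + 1 = Nat.card α ↔
      ∃ x : α, (orbit M x).ncard = 2 ∧ ∀ y ∉ orbit M x, y ∈ fixedPoints M α := by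
  have := Fintype.ofFinite (orbitRel.Quotient M α)
  have hsum : Nat.card α = ∑ ω : orbitRel.Quotient M α, ω.orbit.ncard := by
    rw [Nat.card_congr (selfEquivSigmaOrbits' M α), Nat.card_sigma]
    simp only [Nat.card_coe_set_eq]
  have hpos (ω : orbitRel.Quotient M α) : 1 ≤ ω.orbit.ncard :=
    (orbitRel.Quotient.nonempty_orbit ω).ncard_pos
  rw [hsum, eq_comm, Nat.card_eq_fintype_card, Fintype.sum_eq_card_add_one_iff hpos]
  simp only [← ncard_orbit_eq_one_iff]
  constructor
  · rintro ⟨ω, hω, hother⟩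
    induction ω using Quotient.inductionOn' with | h x => ?_
    refine ⟨x, by rwa [← orbitRel.Quotient.orbit_mk], fun y hy => ?_⟩
    rw [← orbitRel.Quotient.orbit_mk]
    exact hother _ fun h => hy (orbitRel.Quotient.mem_orbit.mpr h)
  · rintro ⟨x, hx, hother⟩
    refine ⟨Quotient.mk'' x, by rwa [orbitRel.Quotient.orbit_mk], fun ω hω => ?_⟩
    induction ω using Quotient.inductionOn' with | h y => ?_
    rw [orbitRel.Quotient.orbit_mk]
    exact hother y fun h => hω (orbitRel.Quotient.mem_orbit.mp h)

end MulAction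

namespace Subgroup

variable {G ι : Type*} [Group G]

theorem mem_zpowers_iff_of_sq_eq_one {τ g : G} (hτ : τ ^ 2 = 1) :
    g ∈ zpowers τ ↔ g = 1 ∨ g = τ := by
  refine ⟨fun h => ?_, ?_⟩
  · obtain ⟨k, rfl⟩ := mem_zpowers_iff.mp h
    rw [zpow_eq_zpow_emod' k hτ]
    rcases Int.emod_two_eq_zero_or_one k with h | h <;> simp [h]
  · rintro (rfl | rfl)
    exacts [one_mem _, mem_zpowers _]

theorem eq_bot_or_eq_of_le_of_card_prime {H K : Subgroup G} (hH : (Nat.card H).Prime)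
    (hKH : K ≤ H) : K = ⊥ ∨ K = H := by
  have := Nat.finite_of_card_ne_zero hH.ne_zero
  rcases (Nat.dvd_prime hH).mp (card_dvd_of_le hKH) with hK | hK
  · exact Or.inl (eq_bot_of_card_eq K hK)
  · exact Or.inr (eq_of_le_of_card_ge hKH hK.ge)

theorem closure_range_eq_iff_of_card_prime {H : Subgroup G} (hH : (Nat.card H).Prime)
    (σ : ι → G) : closure (Set.range σ) = H ↔ (∀ i, σ i ∈ H) ∧ σ ≠ 1 := by
  have hle : closure (Set.range σ) ≤ H ↔ ∀ i, σ i ∈ H := by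
    rw [closure_le, Set.range_subset_iff]; rfl
  have hbot : closure (Set.range σ) ≠ ⊥ ↔ σ ≠ 1 := by
    simp [closure_eq_bot_iff, funext_iff]
  have hH_ne_bot : H ≠ ⊥ := fun h => hH.ne_one (by rw [h, card_bot])
  rw [← hle, ← hbot]
  constructor
  · rintro rfl
    exact ⟨le_rfl, hH_ne_bot⟩
  · rintro ⟨hσ, hne⟩
    exact (eq_bot_or_eq_of_le_of_card_prime hH hσ).resolve_left hne

theorem card_closure_range_eq_of_card_prime [Finite ι] {H : Subgroup G}
    (hH : (Nat.card H).Prime) :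
    Nat.card {σ : ι → G // closure (Set.range σ) = H} = Nat.card H ^ Nat.card ι - 1 := by
  have := Nat.finite_of_card_ne_zero hH.ne_zero
  let S : Set (ι → G) := {σ | ∀ i, σ i ∈ H}
  have hS : Nat.card S = Nat.card H ^ Nat.card ι :=
    (Nat.card_congr <|
      Equiv.subtypePiEquivPi (β := fun _ : ι => G) (p := fun _ g => g ∈ H)).trans Nat.card_fun
  have : Finite S := Nat.finite_of_card_ne_zero (by rw [hS]; exact pow_ne_zero _ hH.ne_zero)
  have h1 : (1 : ι → G) ∈ S := fun _ => one_mem H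
  rw [← hS, Nat.card_coe_set_eq, ← Set.ncard_sdiff_singleton_of_mem h1, ← Nat.card_coe_set_eq]
  exact Nat.card_congr (Equiv.subtypeEquivRight fun σ =>
    closure_range_eq_iff_of_card_prime hH σ)

theorem card_closure_range_mem_of_card_eq_prime [Finite G] [Finite ι] {q : ℕ} (hq : q.Prime)
    {𝓗 : Set (Subgroup G)} (h𝓗 : ∀ H ∈ 𝓗, Nat.card H = q) :
    Nat.card {σ : ι → G // closure (Set.range σ) ∈ 𝓗} = 𝓗.ncard * (q ^ Nat.card ι - 1) := by
  have := Fintype.ofFinite 𝓗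
  calc Nat.card {σ : ι → G // closure (Set.range σ) ∈ 𝓗}
      = ∑ H : 𝓗, Nat.card {σ : ι → G // closure (Set.range σ) = H} := by
        rw [← Nat.card_sigma]
        exact Nat.card_congr (Equiv.sigmaSubtypeFiberEquivSubtype
          (fun σ : ι → G => closure (Set.range σ)) fun _ => Iff.rfl).symm
    _ = ∑ _H : 𝓗, (q ^ Nat.card ι - 1) := Fintype.sum_congr _ _ fun H => by
        rw [card_closure_range_eq_of_card_prime (h𝓗 H H.2 ▸ hq), h𝓗 H H.2]
    _ = 𝓗.ncard * (q ^ Nat.card ι - 1) := by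
        rw [Finset.sum_const, Finset.card_univ, smul_eq_mul, ← Nat.card_eq_fintype_card,
          Nat.card_coe_set_eq]

end Subgroup

namespace Equiv.Perm

open MulAction

variable {α : Type*} [DecidableEq α]

theorem eq_one_or_eq_swap_of_support_subset [Fintype α] {σ : Perm α} {a b : α}
    (h : σ.support ⊆ {a, b}) : σ = 1 ∨ σ = swap a b := by
  have hab (x : α) (hx : σ x ≠ x) : x = a ∨ x = b := by
    simpa using h (mem_support.mpr hx)
  by_cases ha : σ a = a
  · left
    ext x
    by_contra hx
    rcases hab x hx with rfl | rfl
    · exact hx ha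
    · rcases hab (σ x) (fun h => hx (σ.injective h)) with h' | h'
      · exact hx (σ.injective (h'.trans ha.symm) ▸ ha)
      · exact hx h'
  · right
    have hσa : σ a = b := (hab (σ a) fun h => ha (σ.injective h)).resolve_left ha
    have hne : a ≠ b := fun h => ha (h ▸ hσa)
    have hσb : σ b = a := by
      refine (hab (σ b) fun h => ?_).resolve_right fun h' => ?_
      · exact hne (σ.injective (hσa.trans (σ.injective h).symm))
      · exact hne (σ.injective (hσa.trans h'.symm))
    ext x
    rcases eq_or_ne x a with rfl | hxa
    · simp [hσa]
    rcases eq_or_ne x b with rfl | hxb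
    · simp [hσb]
    rw [swap_apply_of_ne_of_ne hxa hxb]
    by_contra hx
    exact (hab x hx).elim hxa hxb

theorem mem_zpowers_swap_iff {σ : Perm α} {a b : α} :
    σ ∈ Subgroup.zpowers (swap a b) ↔ σ = 1 ∨ σ = swap a b :=
  Subgroup.mem_zpowers_iff_of_sq_eq_one (by rw [sq, swap_mul_self])

theorem exists_orbit_ncard_eq_two_iff [Finite α] (G : Subgroup (Perm α)) :
    (∃ x : α, (orbit G x).ncard = 2 ∧ ∀ y ∉ orbit G x, y ∈ fixedPoints G α) ↔
      ∃ τ : Perm α, τ.IsSwap ∧ Subgroup.zpowers τ = G := by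
  have := Fintype.ofFinite α
  constructor
  · rintro ⟨x, hx, hfix⟩
    obtain ⟨_, ⟨⟨g, hg⟩, rfl⟩, hgx⟩ :=
      Set.exists_ne_of_one_lt_ncard (s := orbit G x) (by omega) x
    change g x ≠ x at hgx
    have horbit : orbit G x = {x, g x} :=
      (Set.eq_of_subset_of_ncard_le
        (Set.pair_subset (mem_orbit_self x) (mem_orbit x (⟨g, hg⟩ : G)))
        (by rw [hx]; exact (Set.ncard_pair hgx.symm).ge)).symm
    have hG (h : Perm α) (hh : h ∈ G) : h = 1 ∨ h = swap x (g x) := by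
      refine eq_one_or_eq_swap_of_support_subset fun y hy => ?_
      by_contra hy'
      have : y ∉ orbit G x := by simpa [horbit] using hy'
      exact mem_support.mp hy (hfix y this ⟨h, hh⟩)
    have hgswap : g = swap x (g x) := (hG g hg).resolve_left fun h => hgx (by simp [h])
    refine ⟨swap x (g x), ⟨x, g x, hgx.symm, rfl⟩, le_antisymm ?_ fun h hh => ?_⟩
    · exact Subgroup.zpowers_le.mpr (hgswap ▸ hg)
    · exact mem_zpowers_swap_iff.mpr (hG h hh)
  · rintro ⟨_, ⟨a, b, hab, rfl⟩, rfl⟩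
    have horbit : orbit (Subgroup.zpowers (swap a b)) a = {a, b} := by
      ext y
      simp only [mem_orbit_iff, Subtype.exists, mem_zpowers_swap_iff, Set.mem_insert_iff,
        Set.mem_singleton_iff, Subgroup.mk_smul]
      constructor
      · rintro ⟨σ, rfl | rfl, rfl⟩ <;> simp
      · rintro (rfl | rfl)
        exacts [⟨1, Or.inl rfl, rfl⟩, ⟨_, Or.inr rfl, swap_apply_left _ _⟩]
    refine ⟨a, by rw [horbit, Set.ncard_pair hab], fun y hy ⟨σ, hσ⟩ => ?_⟩
    rw [horbit] at hy
    simp only [Set.mem_insert_iff, Set.mem_singleton_iff, not_or] at hy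
    rcases mem_zpowers_swap_iff.mp hσ with rfl | rfl
    · rfl
    · exact swap_apply_of_ne_of_ne hy.1 hy.2

theorem card_orbitRel_quotient_eq_card_sub_one_iff [Finite α] [Nonempty α]
    (G : Subgroup (Perm α)) :
    Nat.card (orbitRel.Quotient G α) = Nat.card α - 1 ↔
      ∃ τ : Perm α, τ.IsSwap ∧ Subgroup.zpowers τ = G := by
  rw [← exists_orbit_ncard_eq_two_iff, ← card_orbitRel_quotient_add_one_eq_iff]
  have : Nonempty (orbitRel.Quotient G α) := ⟨Quotient.mk'' (Classical.arbitrary α)⟩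
  have := Nat.card_pos (α := orbitRel.Quotient G α)
  omega

theorem ncard_setOf_isSwap [Fintype α] :
    {σ : Perm α | σ.IsSwap}.ncard = (Fintype.card α).choose 2 := by
  calc {σ : Perm α | σ.IsSwap}.ncard = {s : Finset α | s.card = 2}.ncard := by
        refine Set.ncard_congr (fun σ _ => σ.support) (fun σ hσ => card_support_eq_two.mpr hσ)
          ?_ ?_
        · rintro _ τ ⟨a, b, hab, rfl⟩ hτ h
          rw [support_swap hab] at h
          exact ((eq_one_or_eq_swap_of_support_subset h.ge).resolve_left
            hτ.isCycle.ne_one).symm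
        · intro s hs
          obtain ⟨a, b, hab, rfl⟩ := Finset.card_eq_two.mp hs
          exact ⟨swap a b, ⟨a, b, hab, rfl⟩, support_swap hab⟩
    _ = (Fintype.card α).choose 2 := by
        rw [← Nat.card_coe_set_eq, Nat.card_eq_fintype_card]
        exact Fintype.card_finset_len 2

theorem zpowers_injOn_isSwap : Set.InjOn Subgroup.zpowers {σ : Perm α | σ.IsSwap} := by
  rintro _ ⟨a, b, hab, rfl⟩ τ hτ h
  have : τ ∈ Subgroup.zpowers (swap a b) := h ▸ Subgroup.mem_zpowers τ
  exact ((mem_zpowers_swap_iff.mp this).resolve_left hτ.isCycle.ne_one).symm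

theorem commute_and_card_orbitRel_quotient_iff {ι : Type*} [Finite α] [Nonempty α]
    (σ : ι → Perm α) :
    ((∀ i j, Commute (σ i) (σ j)) ∧
        Nat.card (orbitRel.Quotient (Subgroup.closure (Set.range σ)) α) = Nat.card α - 1) ↔
      Subgroup.closure (Set.range σ) ∈ Subgroup.zpowers '' {τ : Perm α | τ.IsSwap} := by
  rw [card_orbitRel_quotient_eq_card_sub_one_iff]
  refine ⟨And.right, fun h => ⟨fun i j => ?_, h⟩⟩
  obtain ⟨τ, -, hτ⟩ := h
  have hmem (i : ι) : σ i ∈ Subgroup.zpowers τ := hτ ▸ Subgroup.subset_closure ⟨i, rfl⟩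
  obtain ⟨k, hk⟩ := Subgroup.mem_zpowers_iff.mp (hmem i)
  obtain ⟨m, hm⟩ := Subgroup.mem_zpowers_iff.mp (hmem j)
  rw [← hk, ← hm]
  exact Commute.zpow_zpow_self τ k m

end Equiv.Perm

theorem stmt17_general (p n : ℕ) (hn : 1 ≤ n) :
    A p n (n - 1) = n.choose 2 * (2 ^ p - 1) := by
  have : Nonempty (Fin n) := Fin.pos_iff_nonempty.mp hn
  calc A p n (n - 1)
      = Nat.card {σ : Fin p → Equiv.Perm (Fin n) // Subgroup.closure (Set.range σ) ∈
          Subgroup.zpowers '' {τ : Equiv.Perm (Fin n) | τ.IsSwap}} := by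
        refine Nat.card_congr (Equiv.subtypeEquivRight fun σ => ?_)
        simpa using Equiv.Perm.commute_and_card_orbitRel_quotient_iff σ
    _ = n.choose 2 * (2 ^ p - 1) := by
        rw [Subgroup.card_closure_range_mem_of_card_eq_prime Nat.prime_two
            (by rintro _ ⟨τ, hτ, rfl⟩; rw [Nat.card_zpowers, hτ.orderOf]),
          Equiv.Perm.zpowers_injOn_isSwap.ncard_image, Equiv.Perm.ncard_setOf_isSwap,
          Fintype.card_fin, Nat.card_fin]

theorem stmt17 (p n : ℕ) (hp : 1 ≤ p) (hn : 1 ≤ n) :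
    A p n (n - 1) = n.choose 2 * (2 ^ p - 1) :=
  stmt17_general p n hn
end

section
/- For all integers p ≥ 1 and n ≥ 2, A(p,n,n−2) = binom(n,3)·(3^p − 1) + 3·binom(n,4)·(2^p − 1)^2. -/
open Equiv Equiv.Perm MulAction Finset Subgroup

variable {α ι : Type*}

lemma isMulCommutative_closure_range {σ : ι → Perm α} (h : ∀ i j, Commute (σ i) (σ j)) :
    IsMulCommutative (closure (Set.range σ)) :=
  isMulCommutative_closure (by rintro _ ⟨i, rfl⟩ _ ⟨j, rfl⟩; exact h i j)

section Orbits

variable [Fintype α] (H : Subgroup (Perm α))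

noncomputable def orbitFinset (x : α) : Finset α :=
  open Classical in univ.filter (· ∈ orbit H x)

noncomputable def nontrivialOrbits [DecidableEq α] : Finset (Finset α) :=
  (univ.image (orbitFinset H)).filter (1 < #·)

variable {H}

@[simp] lemma coe_orbitFinset (x : α) : (orbitFinset H x : Set α) = orbit H x := by
  ext; simp [orbitFinset]

@[simp] lemma mem_orbitFinset {x y : α} : y ∈ orbitFinset H x ↔ y ∈ orbit H x := by
  simp [orbitFinset]

lemma orbitFinset_eq_iff {x y : α} : orbitFinset H x = orbitFinset H y ↔ x ∈ orbit H y := by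
  rw [← orbit_eq_iff, ← Finset.coe_inj, coe_orbitFinset, coe_orbitFinset]

lemma mem_orbitFinset_self (x : α) : x ∈ orbitFinset H x := by simp [mem_orbit_self]

lemma orbitFinset_eq_of_mem {x y : α} (h : y ∈ orbitFinset H x) :
    orbitFinset H y = orbitFinset H x :=
  orbitFinset_eq_iff.mpr (mem_orbitFinset.mp h)

lemma apply_mem_orbitFinset {g : Perm α} (hg : g ∈ H) (x : α) : g x ∈ orbitFinset H x :=
  mem_orbitFinset.mpr ⟨⟨g, hg⟩, rfl⟩

lemma apply_eq_self_of_mem_orbitFinset [IsMulCommutative H] {g : Perm α} (hg : g ∈ H) {x y : α}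
    (hx : g x = x) (hy : y ∈ orbitFinset H x) : g y = y := by
  obtain ⟨⟨h, hh⟩, rfl⟩ := mem_orbitFinset.mp hy
  change g (h x) = h x
  rw [← Perm.mul_apply, setLike_mul_comm hg hh, Perm.mul_apply, hx]

lemma orbitFinset_closure_subset {T : Set (Perm α)} {B : Finset α}
    (hB : ∀ g ∈ T, ∀ y, g y ∈ B ↔ y ∈ B) {x : α} (hx : x ∈ B) :
    orbitFinset (closure T) x ⊆ B := by
  have key : ∀ g ∈ closure T, ∀ y, g y ∈ B ↔ y ∈ B := fun g hg =>
    closure_induction hB (fun _ => Iff.rfl) (fun g h _ _ hg hh y => (hg (h y)).trans (hh y))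
      (fun g _ hg y => by rw [← hg]; simp) hg
  intro y hy
  obtain ⟨⟨g, hg⟩, rfl⟩ := mem_orbitFinset.mp hy
  exact (key g hg x).mpr hx

lemma orbitFinset_closure_eq_singleton {T : Set (Perm α)} {x : α} (hx : ∀ g ∈ T, g x = x) :
    orbitFinset (closure T) x = {x} := by
  refine subset_antisymm (orbitFinset_closure_subset (fun g hg y => ?_) (mem_singleton_self x))
    (singleton_subset_iff.mpr (mem_orbitFinset_self x))
  rw [mem_singleton, mem_singleton]
  exact ⟨fun h => g.injective (h.trans (hx g hg).symm), fun h => h ▸ hx g hg⟩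

variable [DecidableEq α]

lemma mem_nontrivialOrbits {B : Finset α} :
    B ∈ nontrivialOrbits H ↔ (∃ x, orbitFinset H x = B) ∧ 1 < #B := by
  simp [nontrivialOrbits]

lemma card_orbitRel_quotient_eq_card_image_orbitFinset :
    Nat.card (orbitRel.Quotient H α) = #(univ.image (orbitFinset H)) := by
  let F : orbitRel.Quotient H α → univ.image (orbitFinset H) :=
    Quotient.lift (fun x => ⟨orbitFinset H x, mem_image_of_mem _ (mem_univ x)⟩)
      fun x y hxy => Subtype.ext (orbitFinset_eq_iff.mpr hxy)
  have hF : Function.Bijective F := by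
    constructor
    · rintro ⟨x⟩ ⟨y⟩ hxy
      exact Quotient.sound (orbitFinset_eq_iff.mp (congrArg Subtype.val hxy))
    · rintro ⟨B, hB⟩
      obtain ⟨x, -, rfl⟩ := mem_image.mp hB
      exact ⟨Quotient.mk'' x, rfl⟩
  rw [Nat.card_eq_of_bijective F hF, Nat.card_eq_finsetCard]

lemma sum_card_image_orbitFinset : ∑ B ∈ univ.image (orbitFinset H), #B = Fintype.card α := by
  rw [← card_univ, card_eq_sum_card_image (orbitFinset H) univ]
  refine sum_congr rfl fun B hB => ?_
  obtain ⟨x, -, rfl⟩ := mem_image.mp hB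
  congr 1
  ext y
  simp only [mem_filter, mem_univ, true_and]
  exact ⟨orbitFinset_eq_of_mem, fun h => h ▸ mem_orbitFinset_self y⟩

variable (H) in
theorem card_orbitRel_quotient_add_sum_nontrivialOrbits :
    Nat.card (orbitRel.Quotient H α) + ∑ B ∈ nontrivialOrbits H, (#B - 1) = Fintype.card α := by
  have hfilter : ∑ B ∈ nontrivialOrbits H, (#B - 1) = ∑ B ∈ univ.image (orbitFinset H), (#B - 1) :=
    sum_filter_of_ne fun B _ hB => by omega
  have hpos : ∑ B ∈ univ.image (orbitFinset H), #B =
      ∑ B ∈ univ.image (orbitFinset H), (#B - 1) + #(univ.image (orbitFinset H)) := by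
    rw [card_eq_sum_ones, ← sum_add_distrib]
    refine sum_congr rfl fun B hB => ?_
    obtain ⟨x, -, rfl⟩ := mem_image.mp hB
    have := card_pos.mpr ⟨x, mem_orbitFinset_self (H := H) x⟩
    omega
  rw [card_orbitRel_quotient_eq_card_image_orbitFinset, hfilter, ← sum_card_image_orbitFinset, hpos,
    add_comm]

lemma orbitFinset_eq_of_mem_nontrivialOrbits {B : Finset α} (hB : B ∈ nontrivialOrbits H)
    {x : α} (hx : x ∈ B) : orbitFinset H x = B := by
  obtain ⟨⟨y, rfl⟩, -⟩ := mem_nontrivialOrbits.mp hB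
  exact orbitFinset_eq_of_mem hx

lemma apply_mem_of_mem_nontrivialOrbits {B : Finset α} (hB : B ∈ nontrivialOrbits H)
    {g : Perm α} (hg : g ∈ H) {x : α} (hx : x ∈ B) : g x ∈ B :=
  orbitFinset_eq_of_mem_nontrivialOrbits hB hx ▸ apply_mem_orbitFinset hg x

lemma apply_eq_self_of_mem_nontrivialOrbits [IsMulCommutative H] {B : Finset α}
    (hB : B ∈ nontrivialOrbits H) {g : Perm α} (hg : g ∈ H) {x y : α} (hx : x ∈ B) (hy : y ∈ B)
    (hgx : g x = x) : g y = y :=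
  apply_eq_self_of_mem_orbitFinset hg hgx (orbitFinset_eq_of_mem_nontrivialOrbits hB hx ▸ hy)

lemma apply_eq_self_of_forall_notMem {x : α} (hx : ∀ B ∈ nontrivialOrbits H, x ∉ B)
    {g : Perm α} (hg : g ∈ H) : g x = x := by
  have hle : #(orbitFinset H x) ≤ 1 := by
    by_contra! h
    exact hx _ (mem_nontrivialOrbits.mpr ⟨⟨x, rfl⟩, h⟩) (mem_orbitFinset_self x)
  exact card_le_one.mp hle _ (apply_mem_orbitFinset hg x) _ (mem_orbitFinset_self x)

lemma nontrivialOrbits_eq {K : Finset (Finset α)}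
    (hK : ∀ B ∈ K, 1 < #B ∧ ∀ x ∈ B, orbitFinset H x = B)
    (hfix : ∀ x, (∀ B ∈ K, x ∉ B) → orbitFinset H x = {x}) : nontrivialOrbits H = K := by
  ext B
  rw [mem_nontrivialOrbits]
  constructor
  · rintro ⟨⟨x, rfl⟩, hcard⟩
    by_cases hx : ∀ B ∈ K, x ∉ B
    · simp [hfix x hx] at hcard
    · push Not at hx
      obtain ⟨B', hB', hxB'⟩ := hx
      rwa [(hK B' hB').2 x hxB']
  · intro hB
    obtain ⟨hcard, horb⟩ := hK B hB
    obtain ⟨x, hx⟩ := card_pos.mp (by omega : 0 < #B)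
    exact ⟨⟨x, horb x hx⟩, hcard⟩

theorem nontrivialOrbits_zpowers {c : Perm α} (hc : c.IsCycle) :
    nontrivialOrbits (zpowers c) = {c.support} := by
  refine nontrivialOrbits_eq (fun B hB => ?_) fun x hx => ?_
  · rw [mem_singleton.mp hB]
    refine ⟨hc.two_le_card_support, fun x hx => ?_⟩
    ext y
    simp only [mem_orbitFinset, mem_orbit_iff, Subtype.exists, Subgroup.smul_def, Perm.smul_def,
      mem_zpowers_iff, exists_prop, exists_exists_eq_and]
    constructor
    · rintro ⟨k, rfl⟩
      exact zpow_apply_mem_support.mpr hx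
    · intro hy
      exact hc.sameCycle (mem_support.mp hx) (mem_support.mp hy)
  · have hcx : c x = x := notMem_support.mp (by simpa using hx)
    rw [zpowers_eq_closure]
    exact orbitFinset_closure_eq_singleton (by simpa using hcx)

lemma exists_apply_ne_of_mem_nontrivialOrbits_closure {σ : ι → Perm α} {B : Finset α}
    (hB : B ∈ nontrivialOrbits (closure (Set.range σ))) {x : α} (hx : x ∈ B) :
    ∃ i, σ i x ≠ x := by
  by_contra! h
  have h1 := orbitFinset_closure_eq_singleton (T := Set.range σ) (x := x) (by simpa using h)
  have h2 := (mem_nontrivialOrbits.mp hB).2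
  rw [← orbitFinset_eq_of_mem_nontrivialOrbits hB hx, h1, card_singleton] at h2
  exact lt_irrefl 1 h2

lemma pairwiseDisjoint_nontrivialOrbits (H : Subgroup (Perm α)) :
    (nontrivialOrbits H : Set (Finset α)).PairwiseDisjoint id := by
  intro B hB B' hB' hne
  refine disjoint_left.mpr fun x hx hx' => hne ?_
  rw [← orbitFinset_eq_of_mem_nontrivialOrbits hB hx,
    orbitFinset_eq_of_mem_nontrivialOrbits hB' hx']

end Orbits

section ThreeCycles

variable [Fintype α] [DecidableEq α]

lemma Equiv.Perm.IsThreeCycle.eq_of_apply_eq {g h : Perm α} (hg : g.IsThreeCycle)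
    (hh : h.IsThreeCycle) (hgh : g.support = h.support) {a : α} (ha : a ∈ h.support)
    (hga : g a = h a) : g = h := by
  have ha' : a ∈ g.support := hgh ▸ ha
  have hsupp := hg.support_eq_iff_mem_support.mpr ha'
  have hsupp' := hh.support_eq_iff_mem_support.mpr ha
  have hnd := hg.nodup_iff_mem_support.mpr ha'
  have hnd' := hh.nodup_iff_mem_support.mpr ha
  have hgga : g (g a) = h (h a) := by
    have hmem : g (g a) ∈ h.support := hgh ▸ apply_mem_support.mpr (apply_mem_support.mpr ha')
    rw [hsupp'] at hmem
    simp only [List.nodup_cons, List.mem_cons, List.not_mem_nil] at hnd hnd'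
    simp only [mem_insert, mem_singleton] at hmem
    grind
  rw [hg.eq_swap_mul_swap_iff_mem_support.mpr ha', hh.eq_swap_mul_swap_iff_mem_support.mpr ha,
    hgga, hga]

lemma Equiv.Perm.IsThreeCycle.eq_or_eq_inv_of_support_eq {g h : Perm α} (hg : g.IsThreeCycle)
    (hh : h.IsThreeCycle) (hgh : g.support = h.support) : g = h ∨ g = h⁻¹ := by
  obtain ⟨a, ha⟩ := card_pos.mp (hh.card_support ▸ Nat.succ_pos 2 : 0 < #h.support)
  have hga : g a ∈ ({a, h a, h (h a)} : Finset α) := by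
    rw [← hh.support_eq_iff_mem_support.mpr ha, ← hgh]
    exact apply_mem_support.mpr (hgh ▸ ha)
  have hinv : h⁻¹ a = h (h a) := by
    rw [Perm.inv_eq_iff_eq, ← Perm.mul_apply, ← Perm.mul_apply, ← pow_three', ← hh.orderOf,
      pow_orderOf_eq_one, Perm.one_apply]
  simp only [mem_insert, mem_singleton] at hga
  rcases hga with hga | hga | hga
  · exact absurd hga (mem_support.mp (hgh ▸ ha))
  · exact Or.inl (hg.eq_of_apply_eq hh hgh ha hga)
  · exact Or.inr (hg.eq_of_apply_eq hh.inv (by rw [hgh, support_inv]) (by rwa [support_inv])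
      (hga.trans hinv.symm))

lemma eq_one_or_eq_or_eq_inv_of_nontrivialOrbits_eq_singleton {H : Subgroup (Perm α)}
    [IsMulCommutative H] {ρ : Perm α} (hρ : ρ.IsThreeCycle)
    (hH : nontrivialOrbits H = {ρ.support}) {g : Perm α} (hg : g ∈ H) :
    g = 1 ∨ g = ρ ∨ g = ρ⁻¹ := by
  have hS : ρ.support ∈ nontrivialOrbits H := hH ▸ mem_singleton_self _
  by_cases hg1 : g = 1
  · exact Or.inl hg1
  have hsub : g.support ⊆ ρ.support := fun x hx => by
    by_contra hxS
    exact mem_support.mp hx (apply_eq_self_of_forall_notMem (x := x) (by simpa [hH] using hxS) hg)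
  obtain ⟨y, hy⟩ := nonempty_iff_ne_empty.mpr (mt support_eq_empty_iff.mp hg1)
  have hsupp : g.support = ρ.support := by
    refine subset_antisymm hsub fun x hx => mem_support.mpr fun hgx => ?_
    exact mem_support.mp hy (apply_eq_self_of_mem_nontrivialOrbits hS hg hx (hsub hy) hgx)
  have hg3 : g.IsThreeCycle := card_support_eq_three_iff.mp (hsupp ▸ hρ.card_support)
  exact Or.inr (hg3.eq_or_eq_inv_of_support_eq hρ hsupp)

theorem commute_and_nontrivialOrbits_eq_singleton_iff {ρ : Perm α}
    (hρ : ρ.IsThreeCycle) (σ : ι → Perm α) :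
    ((∀ i j, Commute (σ i) (σ j)) ∧ nontrivialOrbits (closure (Set.range σ)) = {ρ.support}) ↔
      (∀ i, σ i ∈ ({1, ρ, ρ⁻¹} : Finset (Perm α))) ∧ σ ≠ 1 := by
  constructor
  · rintro ⟨hcomm, hH⟩
    have := isMulCommutative_closure_range hcomm
    refine ⟨fun i => ?_, fun hσ => ?_⟩
    · simpa using eq_one_or_eq_or_eq_inv_of_nontrivialOrbits_eq_singleton hρ hH
        (Subgroup.subset_closure (Set.mem_range_self i))
    · obtain ⟨x, hx⟩ := card_pos.mp (hρ.card_support ▸ Nat.succ_pos 2 : 0 < #ρ.support)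
      obtain ⟨i, hi⟩ := exists_apply_ne_of_mem_nontrivialOrbits_closure
        (hH ▸ mem_singleton_self _) hx
      simp [hσ] at hi
  · rintro ⟨hmem, hne⟩
    have hzp : ∀ i, σ i ∈ zpowers ρ := fun i => by
      rcases (by simpa using hmem i : σ i = 1 ∨ σ i = ρ ∨ σ i = ρ⁻¹) with h | h | h <;>
        simp [h, mem_zpowers]
    have hcl : closure (Set.range σ) = zpowers ρ := by
      refine le_antisymm ((closure_le _).mpr (Set.range_subset_iff.mpr hzp)) (zpowers_le.mpr ?_)
      obtain ⟨i, hi⟩ := Function.ne_iff.mp hne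
      replace hi : σ i ≠ 1 := hi
      have hσi : σ i ∈ closure (Set.range σ) := Subgroup.subset_closure (Set.mem_range_self i)
      rcases (by simpa [hi] using hmem i : σ i = ρ ∨ σ i = ρ⁻¹) with h | h
      · exact h ▸ hσi
      · simpa [h] using inv_mem hσi
    exact ⟨fun i j => setLike_mul_comm (hzp i) (hzp j), hcl ▸ nontrivialOrbits_zpowers hρ.isCycle⟩
end ThreeCycles

section DisjointSwaps

variable [DecidableEq α] {a b c d : α}

lemma mul_apply_mem_pair_iff (h : [a, b, c, d].Nodup) {u w : Perm α}
    (hu : u = 1 ∨ u = swap a b) (hw : w = 1 ∨ w = swap c d) (y : α) :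
    (u * w) y ∈ ({a, b} : Finset α) ↔ y ∈ ({a, b} : Finset α) := by
  simp only [List.nodup_cons, List.mem_cons, List.not_mem_nil] at h
  rcases hu with rfl | rfl <;> rcases hw with rfl | rfl <;>
    simp only [Perm.mul_apply, Perm.one_apply, swap_apply_def, mem_insert, mem_singleton] <;>
    grind

lemma ite_mul_apply_eq (h : [a, b, c, d].Nodup) {u w : Perm α}
    (hu : u = 1 ∨ u = swap a b) (hw : w = 1 ∨ w = swap c d) :
    (if (u * w) a = a then 1 else swap a b) = u := by
  simp only [List.nodup_cons, List.mem_cons, List.not_mem_nil] at h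
  rcases hu with rfl | rfl <;> rcases hw with rfl | rfl <;>
    simp only [Perm.mul_apply, Perm.one_apply, swap_apply_def] <;> grind

lemma commute_mul_of_mem_pair (h : [a, b, c, d].Nodup) {u w u' w' : Perm α}
    (hu : u = 1 ∨ u = swap a b) (hw : w = 1 ∨ w = swap c d)
    (hu' : u' = 1 ∨ u' = swap a b) (hw' : w' = 1 ∨ w' = swap c d) :
    Commute (u * w) (u' * w') := by
  have : IsMulCommutative (closure {swap a b, swap c d}) := isMulCommutative_closure (by
    simp only [Set.mem_insert_iff, Set.mem_singleton_iff]
    rintro _ (rfl | rfl) _ (rfl | rfl) <;> simp [(disjoint_swap_swap h).commute.eq])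
  have hmem : ∀ {x y : Perm α}, (x = 1 ∨ x = swap a b) → (y = 1 ∨ y = swap c d) →
      x * y ∈ closure {swap a b, swap c d} := by
    have hs : swap a b ∈ closure {swap a b, swap c d} := Subgroup.subset_closure (by simp)
    have ht : swap c d ∈ closure {swap a b, swap c d} := Subgroup.subset_closure (by simp)
    rintro x y (rfl | rfl) (rfl | rfl) <;> simp [hs, ht, mul_mem hs ht]
  exact setLike_mul_comm (hmem hu hw) (hmem hu' hw')

variable [Fintype α]

lemma eq_mul_of_nontrivialOrbits_eq_pair {H : Subgroup (Perm α)} [IsMulCommutative H]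
    (h : [a, b, c, d].Nodup) (hH : nontrivialOrbits H = {{a, b}, {c, d}})
    {g : Perm α} (hg : g ∈ H) :
    g = (if g a = a then 1 else swap a b) * (if g c = c then 1 else swap c d) := by
  -- `g` preserves both orbits, fixes every other point, and fixes an orbit pointwise as soon as
  -- it fixes one of its points; `grind` then checks the identity point by point.
  have hP : {a, b} ∈ nontrivialOrbits H := by simp [hH]
  have hQ : {c, d} ∈ nontrivialOrbits H := by simp [hH]
  have ha := apply_mem_of_mem_nontrivialOrbits hP hg (x := a) (by simp)
  have hb := apply_mem_of_mem_nontrivialOrbits hP hg (x := b) (by simp)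
  have hc := apply_mem_of_mem_nontrivialOrbits hQ hg (x := c) (by simp)
  have hd := apply_mem_of_mem_nontrivialOrbits hQ hg (x := d) (by simp)
  have hab := apply_eq_self_of_mem_nontrivialOrbits hP hg (x := a) (y := b) (by simp) (by simp)
  have hcd := apply_eq_self_of_mem_nontrivialOrbits hQ hg (x := c) (y := d) (by simp) (by simp)
  have hba := apply_eq_self_of_mem_nontrivialOrbits hP hg (x := b) (y := a) (by simp) (by simp)
  have hdc := apply_eq_self_of_mem_nontrivialOrbits hQ hg (x := d) (y := c) (by simp) (by simp)
  have hout : ∀ x, x ≠ a → x ≠ b → x ≠ c → x ≠ d → g x = x := fun x h1 h2 h3 h4 =>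
    apply_eq_self_of_forall_notMem (by simp [hH, h1, h2, h3, h4]) hg
  have hinj := g.injective
  simp only [List.nodup_cons, List.mem_cons, List.not_mem_nil] at h
  simp only [mem_insert, mem_singleton] at ha hb hc hd
  clear hP hQ hH hg
  ext x
  rw [Perm.mul_apply]
  by_cases hx : x = a ∨ x = b ∨ x = c ∨ x = d
  · rcases hx with rfl | rfl | rfl | rfl <;> split_ifs <;>
      simp only [Perm.one_apply, swap_apply_def] <;> grind
  · push Not at hx
    rw [hout x hx.1 hx.2.1 hx.2.2.1 hx.2.2.2]
    split_ifs <;> simp [swap_apply_of_ne_of_ne, hx]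

lemma orbitFinset_closure_eq_pair {T : Set (Perm α)}
    (hT : ∀ g ∈ T, ∀ y, g y ∈ ({a, b} : Finset α) ↔ y ∈ ({a, b} : Finset α))
    (hab : ∃ g ∈ T, g a = b) {x : α} (hx : x ∈ ({a, b} : Finset α)) :
    orbitFinset (closure T) x = {a, b} := by
  obtain ⟨g, hg, hga⟩ := hab
  have ha : orbitFinset (closure T) a = {a, b} := by
    refine subset_antisymm (orbitFinset_closure_subset hT (by simp)) (insert_subset
      (mem_orbitFinset_self a) (singleton_subset_iff.mpr ?_))
    exact hga ▸ apply_mem_orbitFinset (Subgroup.subset_closure hg) a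
  rcases mem_insert.mp hx with rfl | hx
  · exact ha
  · rw [orbitFinset_eq_of_mem (by rw [ha]; exact mem_insert_of_mem hx), ha]

lemma orbitFinset_closure_range_mul_eq_pair (h : [a, b, c, d].Nodup) {u w : ι → Perm α}
    (hu : ∀ i, u i = 1 ∨ u i = swap a b) (hw : ∀ i, w i = 1 ∨ w i = swap c d) (hu1 : u ≠ 1)
    {x : α} (hx : x ∈ ({a, b} : Finset α)) :
    orbitFinset (closure (Set.range (u * w))) x = {a, b} := by
  refine orbitFinset_closure_eq_pair ?_ ?_ hx
  · rintro _ ⟨i, rfl⟩ y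
    exact mul_apply_mem_pair_iff h (hu i) (hw i) y
  · obtain ⟨i, hi⟩ := Function.ne_iff.mp hu1
    refine ⟨_, ⟨i, rfl⟩, ?_⟩
    have hwa : w i a = a := by
      simp only [List.nodup_cons, List.mem_cons, List.not_mem_nil] at h
      rcases hw i with hw | hw <;> simp only [hw, Perm.one_apply, swap_apply_def]
      grind
    simp [(hu i).resolve_left hi, hwa]

lemma nontrivialOrbits_closure_range_mul (h : [a, b, c, d].Nodup) {u w : ι → Perm α}
    (hu : ∀ i, u i = 1 ∨ u i = swap a b) (hw : ∀ i, w i = 1 ∨ w i = swap c d)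
    (hu1 : u ≠ 1) (hw1 : w ≠ 1) :
    nontrivialOrbits (closure (Set.range (u * w))) = {{a, b}, {c, d}} := by
  have hwu : u * w = w * u := funext fun i => by
    simpa using (commute_mul_of_mem_pair h (hu i) (Or.inl rfl) (Or.inl rfl) (hw i)).eq
  simp only [List.nodup_cons, List.mem_cons, List.not_mem_nil, not_or] at h
  refine nontrivialOrbits_eq (fun B hB => ?_) fun x hx => ?_
  · rcases mem_insert.mp hB with rfl | hB
    · exact ⟨by simp [card_pair h.1.1],
        fun x => orbitFinset_closure_range_mul_eq_pair (by simp; grind) hu hw hu1⟩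
    · rw [mem_singleton.mp hB, hwu]
      exact ⟨by simp [card_pair h.2.2.1.1],
        fun x => orbitFinset_closure_range_mul_eq_pair (by simp; grind) hw hu hw1⟩
  · refine orbitFinset_closure_eq_singleton ?_
    rintro _ ⟨i, rfl⟩
    simp only [mem_insert, mem_singleton, forall_eq_or_imp, forall_eq, not_or] at hx
    rcases hu i with hi | hi <;> rcases hw i with hi' | hi' <;>
      simp [hi, hi', swap_apply_of_ne_of_ne, hx.1.1, hx.1.2, hx.2.1, hx.2.2]

end DisjointSwaps

section OrbitShapes

variable [Fintype α] [DecidableEq α]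

variable (α) in
def tripleSingletons : Finset (Finset (Finset α)) :=
  (powersetCard 3 univ).image singleton

variable (α) in
def disjointDoubletonPairs : Finset (Finset α × Finset α) :=
  (powersetCard 2 univ ×ˢ powersetCard 2 univ).filter fun PQ => Disjoint PQ.1 PQ.2

variable (α) in
def doubletonPairs : Finset (Finset (Finset α)) :=
  (disjointDoubletonPairs α).image fun PQ => {PQ.1, PQ.2}

lemma mem_disjointDoubletonPairs {P Q : Finset α} :
    (P, Q) ∈ disjointDoubletonPairs α ↔ #P = 2 ∧ #Q = 2 ∧ Disjoint P Q := by
  simp [disjointDoubletonPairs, and_assoc]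

lemma ne_of_mem_disjointDoubletonPairs {P Q : Finset α} (h : (P, Q) ∈ disjointDoubletonPairs α) :
    P ≠ Q := by
  obtain ⟨hP, -, hPQ⟩ := mem_disjointDoubletonPairs.mp h
  rintro rfl
  rw [disjoint_self_iff_empty] at hPQ
  simp [hPQ] at hP

lemma card_disjointDoubletonPairs :
    #(disjointDoubletonPairs α) = (Fintype.card α).choose 2 * (Fintype.card α - 2).choose 2 := by
  have hfib : ∀ P ∈ powersetCard 2 (univ : Finset α),
      #((powersetCard 2 univ).filter (Disjoint P)) = (Fintype.card α - 2).choose 2 := by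
    intro P hP
    have : (powersetCard 2 univ).filter (Disjoint P) = powersetCard 2 Pᶜ := by
      ext Q
      simp [subset_compl_iff_disjoint_left, and_comm]
    rw [this, card_powersetCard, card_compl, (mem_powersetCard.mp hP).2]
  rw [disjointDoubletonPairs, card_filter, sum_product]
  simp only [← card_filter]
  rw [sum_congr rfl hfib, sum_const, card_powersetCard, card_univ, smul_eq_mul]

lemma card_doubletonPairs : #(doubletonPairs α) = 3 * (Fintype.card α).choose 4 := by
  -- `{P, Q}` comes from exactly the ordered pairs `(P, Q)` and `(Q, P)`,
  -- and `C(n, 2) C(n - 2, 2) = C(n, 4) C(4, 2)`.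
  have hfib : ∀ K ∈ doubletonPairs α,
      #((disjointDoubletonPairs α).filter fun PQ => {PQ.1, PQ.2} = K) = 2 := by
    intro K hK
    obtain ⟨⟨P, Q⟩, hPQ, rfl⟩ := mem_image.mp hK
    rw [card_eq_two]
    refine ⟨(P, Q), (Q, P), by simp [ne_of_mem_disjointDoubletonPairs hPQ], ?_⟩
    ext ⟨P', Q'⟩
    simp only [mem_filter, mem_insert, mem_singleton, Prod.mk.injEq]
    rw [← coe_inj, coe_pair, coe_pair, Set.pair_eq_pair_iff]
    constructor
    · exact fun h => h.2
    · rintro (⟨rfl, rfl⟩ | ⟨rfl, rfl⟩)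
      · exact ⟨hPQ, Or.inl ⟨rfl, rfl⟩⟩
      · refine ⟨?_, Or.inr ⟨rfl, rfl⟩⟩
        obtain ⟨hP, hQ, hd⟩ := mem_disjointDoubletonPairs.mp hPQ
        exact mem_disjointDoubletonPairs.mpr ⟨hQ, hP, hd.symm⟩
  have h := card_eq_sum_card_image
    (fun PQ : Finset α × Finset α => ({PQ.1, PQ.2} : Finset (Finset α))) (disjointDoubletonPairs α)
  change #(disjointDoubletonPairs α) = ∑ K ∈ doubletonPairs α, _ at h
  rw [sum_congr rfl hfib, sum_const, smul_eq_mul, card_disjointDoubletonPairs] at h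
  have hchoose := Nat.choose_mul (n := Fintype.card α) (k := 4) (s := 2) (by norm_num)
  rw [show (4 : ℕ).choose 2 = 6 by rfl, show 4 - 2 = 2 by rfl, h] at hchoose
  omega

lemma sum_card_sub_one_eq_two_iff {K : Finset (Finset α)} (hK : ∀ B ∈ K, 1 < #B)
    (hdisj : (K : Set (Finset α)).PairwiseDisjoint id) :
    ∑ B ∈ K, (#B - 1) = 2 ↔ K ∈ tripleSingletons α ∪ doubletonPairs α := by
  simp only [mem_union, tripleSingletons, doubletonPairs, mem_image, Prod.exists,
    mem_powersetCard, subset_univ, true_and]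
  constructor
  · intro hsum
    have hcard : #K ≤ 2 := hsum ▸ card_eq_sum_ones K ▸ sum_le_sum fun B hB => by
      have := hK B hB; omega
    rcases (by omega : #K = 0 ∨ #K = 1 ∨ #K = 2) with h | h | h
    · simp [card_eq_zero.mp h] at hsum
    · obtain ⟨S, rfl⟩ := card_eq_one.mp h
      exact Or.inl ⟨S, by simp at hsum; omega, rfl⟩
    · obtain ⟨P, Q, hPQ, rfl⟩ := card_eq_two.mp h
      have hP := hK P (by simp)
      have hQ := hK Q (by simp)
      rw [sum_pair hPQ] at hsum
      exact Or.inr ⟨P, Q, mem_disjointDoubletonPairs.mpr ⟨by omega, by omega,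
        hdisj (by simp) (by simp) hPQ⟩, rfl⟩
  · rintro (⟨S, hS, rfl⟩ | ⟨P, Q, hPQ, rfl⟩)
    · simp [hS]
    · obtain ⟨hP, hQ, -⟩ := mem_disjointDoubletonPairs.mp hPQ
      rw [sum_pair (ne_of_mem_disjointDoubletonPairs hPQ), hP, hQ]

lemma card_orbitRel_quotient_eq_card_sub_two_iff (hα : 2 ≤ Fintype.card α)
    (H : Subgroup (Perm α)) :
    Nat.card (orbitRel.Quotient H α) = Fintype.card α - 2 ↔
      nontrivialOrbits H ∈ tripleSingletons α ∪ doubletonPairs α := by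
  rw [← sum_card_sub_one_eq_two_iff (fun B hB => (mem_nontrivialOrbits.mp hB).2)
    (pairwiseDisjoint_nontrivialOrbits H)]
  have := card_orbitRel_quotient_add_sum_nontrivialOrbits H
  omega

lemma disjoint_tripleSingletons_doubletonPairs :
    Disjoint (tripleSingletons α) (doubletonPairs α) := by
  refine disjoint_left.mpr fun K h1 h2 => ?_
  obtain ⟨S, -, rfl⟩ := mem_image.mp h1
  obtain ⟨⟨P, Q⟩, hPQ, hK⟩ := mem_image.mp h2
  have := congrArg card hK
  rw [card_pair (ne_of_mem_disjointDoubletonPairs hPQ), card_singleton] at this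
  omega

end OrbitShapes

section Counting

variable [Fintype α] [DecidableEq α] [Fintype ι] [DecidableEq ι]

variable (ι) in
noncomputable def commutingTuplesWithOrbits (K : Finset (Finset α)) : Finset (ι → Perm α) :=
  open Classical in
  {σ | (∀ i j, Commute (σ i) (σ j)) ∧ nontrivialOrbits (closure (Set.range σ)) = K}

@[simp] lemma mem_commutingTuplesWithOrbits {K : Finset (Finset α)} {σ : ι → Perm α} :
    σ ∈ commutingTuplesWithOrbits ι K ↔
      (∀ i j, Commute (σ i) (σ j)) ∧ nontrivialOrbits (closure (Set.range σ)) = K := by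
  simp [commutingTuplesWithOrbits]

variable (ι) in
def nonidentityTuples (s : Finset (Perm α)) : Finset (ι → Perm α) :=
  (Fintype.piFinset fun _ => s).erase 1

@[simp] lemma mem_nonidentityTuples {s : Finset (Perm α)} {u : ι → Perm α} :
    u ∈ nonidentityTuples ι s ↔ u ≠ 1 ∧ ∀ i, u i ∈ s := by
  simp [nonidentityTuples]

lemma card_nonidentityTuples {s : Finset (Perm α)} (hs : 1 ∈ s) :
    #(nonidentityTuples ι s) = #s ^ Fintype.card ι - 1 := by
  rw [nonidentityTuples, card_erase_of_mem, Fintype.card_piFinset, prod_const, card_univ]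
  exact Fintype.mem_piFinset.mpr fun _ => hs

lemma Equiv.Perm.IsThreeCycle.card_one_self_inv {ρ : Perm α} (hρ : ρ.IsThreeCycle) :
    #({1, ρ, ρ⁻¹} : Finset (Perm α)) = 3 := by
  have hinv : ρ ≠ ρ⁻¹ := fun h => by
    have hsq : ρ ^ 2 = 1 := by
      rw [sq]
      nth_rewrite 2 [h]
      exact mul_inv_cancel ρ
    have := orderOf_dvd_of_pow_eq_one hsq
    rw [hρ.orderOf] at this
    omega
  rw [card_insert_of_notMem (by simp [Ne.symm hρ.ne_one, hρ.ne_one]), card_pair hinv]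

lemma Equiv.Perm.IsThreeCycle.commutingTuplesWithOrbits_support {ρ : Perm α}
    (hρ : ρ.IsThreeCycle) :
    commutingTuplesWithOrbits ι {ρ.support} = nonidentityTuples ι {1, ρ, ρ⁻¹} := by
  ext σ
  rw [mem_commutingTuplesWithOrbits, commute_and_nontrivialOrbits_eq_singleton_iff hρ,
    mem_nonidentityTuples, and_comm]

theorem card_commutingTuplesWithOrbits_singleton {S : Finset α} (hS : #S = 3) :
    #(commutingTuplesWithOrbits ι {S}) = 3 ^ Fintype.card ι - 1 := by
  obtain ⟨a, b, c, hab, hac, hbc, rfl⟩ := card_eq_three.mp hS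
  have hρ := isThreeCycle_swap_mul_swap_same hab hac hbc
  have hsupp : (swap a b * swap a c).support = {a, b, c} := by
    refine eq_of_subset_of_card_le (fun x hx => ?_) (by rw [hS, hρ.card_support])
    have := support_mul_le (swap a b) (swap a c) hx
    simp only [Finset.sup_eq_union, mem_union, support_swap hab, support_swap hac, mem_insert,
      mem_singleton] at this ⊢
    tauto
  rw [← hsupp, hρ.commutingTuplesWithOrbits_support, card_nonidentityTuples (by simp),
    hρ.card_one_self_inv]

lemma commutingTuplesWithOrbits_pair_eq_image {a b c d : α} (h : [a, b, c, d].Nodup) :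
    commutingTuplesWithOrbits ι {{a, b}, {c, d}} =
      (nonidentityTuples ι {1, swap a b} ×ˢ nonidentityTuples ι {1, swap c d}).image
        fun uw => uw.1 * uw.2 := by
  ext σ
  simp only [mem_commutingTuplesWithOrbits, mem_image, mem_product, mem_nonidentityTuples,
    mem_insert, mem_singleton, Prod.exists]
  constructor
  · rintro ⟨hcomm, hH⟩
    have := isMulCommutative_closure_range hcomm
    have hσ := fun i => eq_mul_of_nontrivialOrbits_eq_pair h hH
      (Subgroup.subset_closure (Set.mem_range_self i))
    obtain ⟨i, hi⟩ := exists_apply_ne_of_mem_nontrivialOrbits_closure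
      (hH ▸ by simp : ({a, b} : Finset α) ∈ nontrivialOrbits (closure (Set.range σ)))
      (x := a) (by simp)
    obtain ⟨j, hj⟩ := exists_apply_ne_of_mem_nontrivialOrbits_closure
      (hH ▸ by simp : ({c, d} : Finset α) ∈ nontrivialOrbits (closure (Set.range σ)))
      (x := c) (by simp)
    simp only [List.nodup_cons, List.mem_cons, List.not_mem_nil, not_or] at h
    refine ⟨fun i => if σ i a = a then 1 else swap a b, fun i => if σ i c = c then 1 else swap c d,
      ⟨⟨fun hu => ?_, fun i => ?_⟩, fun hw => ?_, fun i => ?_⟩, funext fun i => (hσ i).symm⟩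
    · simpa [hi, swap_eq_one_iff, h.1.1] using congrFun hu i
    · by_cases h' : σ i a = a <;> simp [h']
    · simpa [hj, swap_eq_one_iff, h.2.2.1.1] using congrFun hw j
    · by_cases h' : σ i c = c <;> simp [h']
  · rintro ⟨u, w, ⟨⟨hu1, hu⟩, hw1, hw⟩, rfl⟩
    exact ⟨fun i j => commute_mul_of_mem_pair h (hu i) (hw i) (hu j) (hw j),
      nontrivialOrbits_closure_range_mul h hu hw hu1 hw1⟩

lemma injOn_mul_nonidentityTuples {a b c d : α} (h : [a, b, c, d].Nodup) :
    Set.InjOn (fun uw : (ι → Perm α) × (ι → Perm α) => uw.1 * uw.2)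
      ↑(nonidentityTuples ι {1, swap a b} ×ˢ nonidentityTuples ι {1, swap c d}) := by
  rintro ⟨u, w⟩ huw ⟨u', w'⟩ huw' heq
  replace heq : u * w = u' * w' := heq
  simp only [coe_product, Set.mem_prod, mem_coe, mem_nonidentityTuples, mem_insert,
    mem_singleton] at huw huw'
  have hu : ∀ i, u i = u' i := fun i => by
    rw [← ite_mul_apply_eq h (huw.1.2 i) (huw.2.2 i), ← ite_mul_apply_eq h (huw'.1.2 i)
      (huw'.2.2 i), ← Pi.mul_apply, ← Pi.mul_apply u', heq]
  have hw : ∀ i, w i = w' i := fun i => by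
    have := congrFun heq i
    rwa [Pi.mul_apply, Pi.mul_apply, hu i, mul_right_inj] at this
  exact Prod.ext (funext hu) (funext hw)

theorem card_commutingTuplesWithOrbits_pair {a b c d : α} (h : [a, b, c, d].Nodup) :
    #(commutingTuplesWithOrbits ι {{a, b}, {c, d}}) = (2 ^ Fintype.card ι - 1) ^ 2 := by
  have hne : (1 : Perm α) ≠ swap a b ∧ (1 : Perm α) ≠ swap c d := by
    simp only [List.nodup_cons, List.mem_cons, List.not_mem_nil, not_or] at h
    simp [eq_comm, swap_eq_one_iff, h.1.1, h.2.2.1.1]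
  rw [commutingTuplesWithOrbits_pair_eq_image h, card_image_of_injOn
    (injOn_mul_nonidentityTuples h), card_product, card_nonidentityTuples (by simp),
    card_nonidentityTuples (by simp), card_pair hne.1, card_pair hne.2, sq]

lemma card_biUnion_commutingTuplesWithOrbits (𝒮 : Finset (Finset (Finset α))) :
    #(𝒮.biUnion (commutingTuplesWithOrbits ι)) = ∑ K ∈ 𝒮, #(commutingTuplesWithOrbits ι K) :=
  card_biUnion fun _ _ _ _ hne => disjoint_left.mpr fun _ hσ hσ' =>
    hne ((mem_commutingTuplesWithOrbits.mp hσ).2.symm.trans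
      (mem_commutingTuplesWithOrbits.mp hσ').2)

lemma sum_card_commutingTuplesWithOrbits_tripleSingletons :
    ∑ K ∈ tripleSingletons α, #(commutingTuplesWithOrbits ι K) =
      (Fintype.card α).choose 3 * (3 ^ Fintype.card ι - 1) := by
  rw [tripleSingletons, sum_image singleton_injective.injOn,
    sum_congr rfl fun S hS => card_commutingTuplesWithOrbits_singleton (mem_powersetCard.mp hS).2,
    sum_const, card_powersetCard, card_univ, smul_eq_mul]

lemma sum_card_commutingTuplesWithOrbits_doubletonPairs :
    ∑ K ∈ doubletonPairs α, #(commutingTuplesWithOrbits ι K) =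
      3 * (Fintype.card α).choose 4 * (2 ^ Fintype.card ι - 1) ^ 2 := by
  refine (sum_congr rfl fun K hK => ?_).trans (by rw [sum_const, card_doubletonPairs, smul_eq_mul])
  obtain ⟨⟨P, Q⟩, hPQ, rfl⟩ := mem_image.mp hK
  obtain ⟨hP, hQ, hdisj⟩ := mem_disjointDoubletonPairs.mp hPQ
  obtain ⟨a, b, hab, rfl⟩ := card_eq_two.mp hP
  obtain ⟨c, d, hcd, rfl⟩ := card_eq_two.mp hQ
  refine card_commutingTuplesWithOrbits_pair ?_
  simp only [disjoint_insert_left, disjoint_insert_right, disjoint_singleton, mem_insert,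
    mem_singleton, not_or] at hdisj
  simp only [List.nodup_cons, List.mem_cons, List.not_mem_nil, List.nodup_nil, or_false]
  grind

theorem card_commutingTuples_of_card_orbits_eq_card_sub_two (hα : 2 ≤ Fintype.card α) :
    Nat.card {σ : ι → Perm α // (∀ i j, Commute (σ i) (σ j)) ∧
      Nat.card (orbitRel.Quotient (closure (Set.range σ)) α) = Fintype.card α - 2} =
      (Fintype.card α).choose 3 * (3 ^ Fintype.card ι - 1) +
        3 * (Fintype.card α).choose 4 * (2 ^ Fintype.card ι - 1) ^ 2 := by
  have hmem : ∀ σ : ι → Perm α, ((∀ i j, Commute (σ i) (σ j)) ∧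
      Nat.card (orbitRel.Quotient (closure (Set.range σ)) α) = Fintype.card α - 2) ↔
      σ ∈ (tripleSingletons α ∪ doubletonPairs α).biUnion (commutingTuplesWithOrbits ι) := by
    simp [card_orbitRel_quotient_eq_card_sub_two_iff hα, and_comm]
  rw [Nat.card_congr (Equiv.subtypeEquivRight hmem), Nat.card_eq_finsetCard,
    card_biUnion_commutingTuplesWithOrbits, sum_union disjoint_tripleSingletons_doubletonPairs,
    sum_card_commutingTuplesWithOrbits_tripleSingletons,
    sum_card_commutingTuplesWithOrbits_doubletonPairs]

end Counting

theorem stmt18_general (p n : ℕ) (hn : 2 ≤ n) :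
    A p n (n - 2) = n.choose 3 * (3 ^ p - 1) + 3 * n.choose 4 * (2 ^ p - 1) ^ 2 := by
  have h := card_commutingTuples_of_card_orbits_eq_card_sub_two (α := Fin n) (ι := Fin p)
    (by simpa using hn)
  simp only [Fintype.card_fin] at h
  exact h

theorem stmt18 (p n : ℕ) (hp : 1 ≤ p) (hn : 2 ≤ n) :
    A p n (n - 2) = n.choose 3 * (3 ^ p - 1) + 3 * n.choose 4 * (2 ^ p - 1) ^ 2 :=
  stmt18_general p n hn
end
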